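/- arXiv:1407.1598 — 8 statements merged into one kernel-verified Lean document; each statement's English description precedes it below -/
import Mathlib

section
/- Let B be a partition of {1,…,N} into nonempty blocks and J(x) = Σ_{b∈B} ‖x_b‖₂ the ℓ¹–ℓ² group norm, where x_b ∈ ℝ^{|b|} is the restriction of x to the block b. Then for every x ∈ ℝ^N the model tangent subspace satisfies T_x = {u ∈ ℝ^N : u_b = 0 for every block b ∈ B with x_b = 0}. -/
open Matrix

/-- Euclidean dot product on `ℝ^n`. -/
noncomputable def dotp {n : ℕ} (u v : Fin n → ℝ) : ℝ := ∑ i, u i * v i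

/-- Euclidean (ℓ²) norm on `ℝ^n`. -/
noncomputable def nrm2 {n : ℕ} (u : Fin n → ℝ) : ℝ := Real.sqrt (∑ i, (u i) ^ 2)

/-- ℓ¹ norm on `ℝ^n`. -/
noncomputable def l1norm {n : ℕ} (u : Fin n → ℝ) : ℝ := ∑ i, |u i|

/-- ℓ^∞ norm of a finitely indexed real vector. -/
noncomputable def linf {ι : Type*} [Fintype ι] (u : ι → ℝ) : ℝ := ⨆ i, |u i|

/-- The sign function: 1 for positive, -1 for negative, 0 at 0. -/
noncomputable def sgn (t : ℝ) : ℝ := if 0 < t then 1 else if t < 0 then -1 else 0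

/-- Subdifferential of a finite-valued function `J : ℝ^n → ℝ` at `x`:
`∂J(x) = {η : J(x+δ) ≥ J(x) + ⟨η,δ⟩ for all δ}`. -/
def subdiff {n : ℕ} (J : (Fin n → ℝ) → ℝ) (x : Fin n → ℝ) : Set (Fin n → ℝ) :=
  {η | ∀ δ, J x + dotp η δ ≤ J (x + δ)}

/-- The model tangent subspace `T_x = Lin(∂J(x))^⊥`, where `Lin(E)` is the linear
space parallel to the affine hull of `E`. -/
def modelT {n : ℕ} (J : (Fin n → ℝ) → ℝ) (x : Fin n → ℝ) : Set (Fin n → ℝ) :=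
  {u | ∀ v ∈ (affineSpan ℝ (subdiff J x)).direction, dotp u v = 0}

section Aux
variable {N : ℕ}

lemma partition_sum (B : Finset (Finset (Fin N)))
    (hdisj : ∀ b ∈ B, ∀ b' ∈ B, b ≠ b' → Disjoint b b')
    (hcover : ∀ i : Fin N, ∃ b ∈ B, i ∈ b) (f : Fin N → ℝ) :
    ∑ i, f i = ∑ b ∈ B, ∑ i ∈ b, f i := by
  have huniv : (Finset.univ : Finset (Fin N)) = B.biUnion id := by
    ext i
    simp only [Finset.mem_univ, Finset.mem_biUnion, id, true_iff]
    exact hcover i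
  rw [huniv]
  exact Finset.sum_biUnion (fun b hb b' hb' hne => hdisj b hb b' hb' hne)

lemma cs_sqrt (s : Finset (Fin N)) (f g : Fin N → ℝ) :
    ∑ i ∈ s, f i * g i ≤ Real.sqrt (∑ i ∈ s, f i ^ 2) * Real.sqrt (∑ i ∈ s, g i ^ 2) := by
  have h := Finset.sum_mul_sq_le_sq_mul_sq s f g
  have h1 : ∑ i ∈ s, f i * g i ≤ Real.sqrt ((∑ i ∈ s, f i ^ 2) * ∑ i ∈ s, g i ^ 2) := by
    calc ∑ i ∈ s, f i * g i ≤ |∑ i ∈ s, f i * g i| := le_abs_self _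
    _ = Real.sqrt ((∑ i ∈ s, f i * g i) ^ 2) := (Real.sqrt_sq_eq_abs _).symm
    _ ≤ _ := Real.sqrt_le_sqrt h
  rwa [Real.sqrt_mul (Finset.sum_nonneg fun i _ => sq_nonneg _)] at h1

lemma sqrt_sum_sq_eq_zero_iff (b : Finset (Fin N)) (x : Fin N → ℝ) :
    Real.sqrt (∑ i ∈ b, x i ^ 2) = 0 ↔ ∀ i ∈ b, x i = 0 := by
  rw [Real.sqrt_eq_zero (Finset.sum_nonneg fun i _ => sq_nonneg _),
    Finset.sum_eq_zero_iff_of_nonneg (fun i _ => sq_nonneg _)]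
  constructor
  · intro h i hi; exact pow_eq_zero_iff two_ne_zero |>.mp (h i hi)
  · intro h i hi; rw [h i hi]; ring

lemma dotp_sub_right {n : ℕ} (u v w : Fin n → ℝ) : dotp u (v - w) = dotp u v - dotp u w := by
  simp [dotp, mul_sub, Finset.sum_sub_distrib]

lemma dotp_add_right {n : ℕ} (u v w : Fin n → ℝ) : dotp u (v + w) = dotp u v + dotp u w := by
  simp [dotp, mul_add, Finset.sum_add_distrib]

lemma dotp_smul_right {n : ℕ} (c : ℝ) (u v : Fin n → ℝ) : dotp u (c • v) = c * dotp u v := by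
  simp [dotp, Finset.mul_sum]; apply Finset.sum_congr rfl; intro i _; ring

lemma dotp_neg_right {n : ℕ} (u v : Fin n → ℝ) : dotp u (-v) = - dotp u v := by
  simp [dotp]

/-- Sufficiency: dual-ball + alignment conditions imply membership in the subdifferential. -/
lemma suff_mem (B : Finset (Finset (Fin N)))
    (hdisj : ∀ b ∈ B, ∀ b' ∈ B, b ≠ b' → Disjoint b b')
    (hcover : ∀ i : Fin N, ∃ b ∈ B, i ∈ b)
    (J : (Fin N → ℝ) → ℝ)
    (hJ : ∀ x, J x = ∑ b ∈ B, Real.sqrt (∑ i ∈ b, (x i) ^ 2))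
    (x η : Fin N → ℝ)
    (h1 : ∀ b ∈ B, ∑ i ∈ b, η i ^ 2 ≤ 1)
    (h2 : ∀ b ∈ B, ∑ i ∈ b, η i * x i = Real.sqrt (∑ i ∈ b, x i ^ 2)) :
    η ∈ subdiff J x := by
  intro δ
  rw [hJ, hJ]
  simp only [Pi.add_apply]
  have hd : dotp η δ = ∑ b ∈ B, ∑ i ∈ b, η i * δ i := partition_sum B hdisj hcover _
  rw [hd, ← Finset.sum_add_distrib]
  apply Finset.sum_le_sum
  intro b hb
  have heq : Real.sqrt (∑ i ∈ b, x i ^ 2) + ∑ i ∈ b, η i * δ i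
      = ∑ i ∈ b, η i * (x i + δ i) := by
    rw [← h2 b hb, ← Finset.sum_add_distrib]
    exact Finset.sum_congr rfl fun i _ => by ring
  rw [heq]
  calc ∑ i ∈ b, η i * (x i + δ i)
      ≤ Real.sqrt (∑ i ∈ b, η i ^ 2) * Real.sqrt (∑ i ∈ b, (x i + δ i) ^ 2) :=
        cs_sqrt b η _
    _ ≤ 1 * Real.sqrt (∑ i ∈ b, (x i + δ i) ^ 2) := by
        apply mul_le_mul_of_nonneg_right _ (Real.sqrt_nonneg _)
        calc Real.sqrt (∑ i ∈ b, η i ^ 2) ≤ Real.sqrt 1 := Real.sqrt_le_sqrt (h1 b hb)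
        _ = 1 := Real.sqrt_one
    _ = Real.sqrt (∑ i ∈ b, (x i + δ i) ^ 2) := one_mul _

/-- Necessity: on blocks where `x` does not vanish, every subgradient is determined. -/
lemma nec_eq (B : Finset (Finset (Fin N)))
    (hdisj : ∀ b ∈ B, ∀ b' ∈ B, b ≠ b' → Disjoint b b')
    (hcover : ∀ i : Fin N, ∃ b ∈ B, i ∈ b)
    (J : (Fin N → ℝ) → ℝ)
    (hJ : ∀ x, J x = ∑ b ∈ B, Real.sqrt (∑ i ∈ b, (x i) ^ 2))
    (x η : Fin N → ℝ) (hη : η ∈ subdiff J x)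
    (b : Finset (Fin N)) (hb : b ∈ B)
    (hbx : Real.sqrt (∑ j ∈ b, x j ^ 2) ≠ 0) :
    ∀ i ∈ b, η i = x i / Real.sqrt (∑ j ∈ b, x j ^ 2) := by
  -- Step 1 : dotp η x = J x
  have key1 : dotp η x = J x := by
    have ha := hη (-x)
    have hbb := hη x
    have h0 : J (x + -x) = 0 := by
      have : x + -x = 0 := by abel
      rw [this, hJ]
      simp
    have h2x : J (x + x) = 2 * J x := by
      rw [hJ, hJ, Finset.mul_sum]
      apply Finset.sum_congr rfl
      intro c _
      have hs : ∑ i ∈ c, ((x + x) i) ^ 2 = 2 ^ 2 * ∑ i ∈ c, x i ^ 2 := by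
        rw [Finset.mul_sum]
        exact Finset.sum_congr rfl fun i _ => by simp [Pi.add_apply]; ring
      rw [hs, Real.sqrt_mul (by positivity), Real.sqrt_sq (by norm_num)]
    rw [dotp_neg_right] at ha
    rw [h0] at ha
    rw [h2x] at hbb
    linarith
  -- Step 2 : dual-ball bound on each block
  have key2 : ∀ c ∈ B, ∑ i ∈ c, η i ^ 2 ≤ 1 := by
    intro c hc
    set z : Fin N → ℝ := fun j => if j ∈ c then η j else 0 with hz
    have hdz : dotp η z = ∑ i ∈ c, η i ^ 2 := by
      rw [dotp]
      rw [← Finset.sum_subset (Finset.subset_univ c)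
        (fun i _ hic => by simp [hz, hic])]
      exact Finset.sum_congr rfl fun i hi => by simp [hz, hi]; ring
    have hJz : J z = Real.sqrt (∑ i ∈ c, η i ^ 2) := by
      rw [hJ]
      rw [Finset.sum_eq_single c]
      · congr 1
        exact Finset.sum_congr rfl fun i hi => by simp [hz, hi]
      · intro c' hc' hnec
        have hzc' : ∀ i ∈ c', z i = 0 := by
          intro i hi
          have hic : i ∉ c := fun h => (Finset.disjoint_left.mp (hdisj c' hc' c hc hnec) hi) h
          simp [hz, hic]
        rw [Finset.sum_eq_zero (fun i hi => by rw [hzc' i hi]; ring)]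
        simp
      · intro h; exact absurd hc h
    have hsub := hη (z - x)
    have hxz : x + (z - x) = z := by abel
    rw [hxz, dotp_sub_right, key1] at hsub
    set s := ∑ i ∈ c, η i ^ 2 with hsdef
    have hs0 : 0 ≤ s := Finset.sum_nonneg fun i _ => sq_nonneg _
    have hss : s ≤ Real.sqrt s := by rw [hdz, hJz] at hsub; linarith
    nlinarith [Real.sq_sqrt hs0, Real.sqrt_nonneg s]
  -- Step 3 : per-block equality of inner products
  have key3 : ∀ c ∈ B, ∑ i ∈ c, η i * x i = Real.sqrt (∑ i ∈ c, x i ^ 2) := by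
    have hle : ∀ c ∈ B, ∑ i ∈ c, η i * x i ≤ Real.sqrt (∑ i ∈ c, x i ^ 2) := by
      intro c hc
      calc ∑ i ∈ c, η i * x i
          ≤ Real.sqrt (∑ i ∈ c, η i ^ 2) * Real.sqrt (∑ i ∈ c, x i ^ 2) := cs_sqrt c η x
        _ ≤ 1 * Real.sqrt (∑ i ∈ c, x i ^ 2) := by
            apply mul_le_mul_of_nonneg_right _ (Real.sqrt_nonneg _)
            calc Real.sqrt (∑ i ∈ c, η i ^ 2) ≤ Real.sqrt 1 := Real.sqrt_le_sqrt (key2 c hc)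
            _ = 1 := Real.sqrt_one
        _ = _ := one_mul _
    have hsum : ∑ c ∈ B, ∑ i ∈ c, η i * x i = ∑ c ∈ B, Real.sqrt (∑ i ∈ c, x i ^ 2) := by
      rw [← partition_sum B hdisj hcover (fun i => η i * x i), ← hJ]
      exact key1
    exact fun c hc => (Finset.sum_eq_sum_iff_of_le hle).mp hsum c hc
  -- Step 4 : conclude
  intro i hi
  set r := Real.sqrt (∑ j ∈ b, x j ^ 2) with hrdef
  have hr : 0 < r := lt_of_le_of_ne (Real.sqrt_nonneg _) (Ne.symm hbx)
  have hr2 : r ^ 2 = ∑ j ∈ b, x j ^ 2 :=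
    Real.sq_sqrt (Finset.sum_nonneg fun j _ => sq_nonneg _)
  have hexp : ∑ j ∈ b, (η j - x j / r) ^ 2
      = (∑ j ∈ b, η j ^ 2) - (2 / r) * (∑ j ∈ b, η j * x j)
        + (1 / r ^ 2) * (∑ j ∈ b, x j ^ 2) := by
    rw [Finset.sum_congr rfl (fun j _ =>
      show (η j - x j / r) ^ 2
        = η j ^ 2 - (2 / r) * (η j * x j) + (1 / r ^ 2) * (x j ^ 2) by
      field_simp; ring)]
    rw [Finset.sum_add_distrib, Finset.sum_sub_distrib, ← Finset.mul_sum, ← Finset.mul_sum]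
  have hle0 : ∑ j ∈ b, (η j - x j / r) ^ 2 ≤ 0 := by
    have h2' : (2 / r) * r = 2 := by field_simp
    have h1' : (1 / r ^ 2) * r ^ 2 = 1 := by field_simp
    rw [hexp, key3 b hb, ← hrdef, ← hr2, h2', h1']
    linarith [key2 b hb]
  have hterm : (η i - x i / r) ^ 2 = 0 :=
    le_antisymm (le_trans (Finset.single_le_sum (fun j _ => sq_nonneg (η j - x j / r)) hi) hle0)
      (sq_nonneg _)
  have := pow_eq_zero_iff two_ne_zero |>.mp hterm
  linarith [this]
end Aux

/-- for the ℓ¹–ℓ² group norm associated to a partition `B` of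
`{1,…,N}` into nonempty blocks, the model tangent subspace at `x` is the set of
vectors vanishing on every block where `x` vanishes. -/
theorem stmt2 {N : ℕ} (B : Finset (Finset (Fin N)))
    (hne : ∀ b ∈ B, b.Nonempty)
    (hdisj : ∀ b ∈ B, ∀ b' ∈ B, b ≠ b' → Disjoint b b')
    (hcover : ∀ i : Fin N, ∃ b ∈ B, i ∈ b)
    (J : (Fin N → ℝ) → ℝ)
    (hJ : ∀ x, J x = ∑ b ∈ B, Real.sqrt (∑ i ∈ b, (x i) ^ 2))
    (x : Fin N → ℝ) :
    modelT J x = {u : Fin N → ℝ | ∀ b ∈ B, (∀ i ∈ b, x i = 0) → ∀ i ∈ b, u i = 0} := by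
  ext u
  simp only [modelT, Set.mem_setOf_eq]
  constructor
  · intro hu b hb hxb i hi
    have hcover' := hcover
    choose blk hblkB hblkmem using hcover'
    have hblku : ∀ c ∈ B, ∀ j ∈ c, blk j = c := by
      intro c hc j hj
      by_contra hne'
      exact (Finset.disjoint_left.mp (hdisj _ (hblkB j) c hc hne') (hblkmem j)) hj
    set η₀ : Fin N → ℝ := fun j =>
      if Real.sqrt (∑ k ∈ blk j, x k ^ 2) = 0 then 0
      else x j / Real.sqrt (∑ k ∈ blk j, x k ^ 2) with hη₀
    have hcond : ∀ c ∈ B, (∑ j ∈ c, η₀ j ^ 2 ≤ 1) ∧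
        (∑ j ∈ c, η₀ j * x j = Real.sqrt (∑ j ∈ c, x j ^ 2)) := by
      intro c hc
      have hval : ∀ j ∈ c, η₀ j =
          if Real.sqrt (∑ k ∈ c, x k ^ 2) = 0 then 0
          else x j / Real.sqrt (∑ k ∈ c, x k ^ 2) := by
        intro j hj
        rw [hη₀]
        simp only
        rw [hblku c hc j hj]
      by_cases hrc : Real.sqrt (∑ k ∈ c, x k ^ 2) = 0
      · constructor
        · rw [Finset.sum_eq_zero (fun j hj => by rw [hval j hj, if_pos hrc]; ring)]
          norm_num
        · rw [Finset.sum_eq_zero (fun j hj => by rw [hval j hj, if_pos hrc]; ring)]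
          exact hrc.symm
      · have hr2 : Real.sqrt (∑ k ∈ c, x k ^ 2) ^ 2 = ∑ k ∈ c, x k ^ 2 :=
          Real.sq_sqrt (Finset.sum_nonneg fun k _ => sq_nonneg _)
        constructor
        · have heq : ∑ j ∈ c, η₀ j ^ 2 = 1 := by
            rw [Finset.sum_congr rfl (fun j hj => by rw [hval j hj, if_neg hrc])]
            have hS : (∑ k ∈ c, x k ^ 2) ≠ 0 := by
              intro h
              apply hrc
              rw [h, Real.sqrt_zero]
            rw [Finset.sum_congr rfl (fun j _ => div_pow (x j) _ 2), ← Finset.sum_div, hr2]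
            exact div_self hS
          linarith
        · rw [Finset.sum_congr rfl (fun j hj => by rw [hval j hj, if_neg hrc])]
          rw [Finset.sum_congr rfl (fun j _ =>
            show x j / Real.sqrt (∑ k ∈ c, x k ^ 2) * x j
              = x j ^ 2 / Real.sqrt (∑ k ∈ c, x k ^ 2) by ring)]
          rw [← Finset.sum_div]
          exact Real.div_sqrt
    have hmem0 : η₀ ∈ subdiff J x :=
      suff_mem B hdisj hcover J hJ x η₀ (fun c hc => (hcond c hc).1) (fun c hc => (hcond c hc).2)
    set e : Fin N → ℝ := fun j => if j = i then 1 else 0 with he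
    have hrb : Real.sqrt (∑ k ∈ b, x k ^ 2) = 0 := (sqrt_sum_sq_eq_zero_iff b x).mpr hxb
    have hη₀b : ∀ j ∈ b, η₀ j = 0 := by
      intro j hj
      rw [hη₀]
      simp only
      rw [hblku b hb j hj, if_pos hrb]
    have hmem1 : η₀ + e ∈ subdiff J x := by
      apply suff_mem B hdisj hcover J hJ x
      · intro c hc
        by_cases hcb : c = b
        · subst hcb
          rw [Finset.sum_congr rfl (fun j hj => by
            show ((η₀ + e) j) ^ 2 = e j ^ 2
            rw [Pi.add_apply, hη₀b j hj, zero_add])]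
          have : ∑ j ∈ c, e j ^ 2 = 1 := by
            rw [he]
            simp only
            rw [Finset.sum_congr rfl (fun j _ =>
              show (if j = i then (1:ℝ) else 0) ^ 2 = if j = i then 1 else 0 by
                split <;> norm_num)]
            rw [Finset.sum_ite_eq' c i (fun _ => (1:ℝ)), if_pos hi]
          linarith
        · have hec : ∀ j ∈ c, e j = 0 := by
            intro j hj
            have hji : j ≠ i := by
              intro h
              subst h
              exact (Finset.disjoint_left.mp (hdisj c hc b hb hcb) hj) hi
            simp [he, hji]
          rw [Finset.sum_congr rfl (fun j hj => by
            show ((η₀ + e) j) ^ 2 = η₀ j ^ 2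
            rw [Pi.add_apply, hec j hj, add_zero])]
          exact (hcond c hc).1
      · intro c hc
        by_cases hcb : c = b
        · subst hcb
          rw [Finset.sum_eq_zero (fun j hj => by rw [hxb j hj]; ring)]
          exact hrb.symm
        · have hec : ∀ j ∈ c, e j = 0 := by
            intro j hj
            have hji : j ≠ i := by
              intro h
              subst h
              exact (Finset.disjoint_left.mp (hdisj c hc b hb hcb) hj) hi
            simp [he, hji]
          rw [Finset.sum_congr rfl (fun j hj => by
            show (η₀ + e) j * x j = η₀ j * x j
            rw [Pi.add_apply, hec j hj, add_zero])]
          exact (hcond c hc).2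
    have hdir : e ∈ (affineSpan ℝ (subdiff J x)).direction := by
      rw [direction_affineSpan, vectorSpan_def]
      apply Submodule.subset_span
      have hv : (η₀ + e) -ᵥ η₀ ∈ subdiff J x -ᵥ subdiff J x := Set.vsub_mem_vsub hmem1 hmem0
      simpa using hv
    have h0 := hu e hdir
    rw [dotp] at h0
    simpa [he, Finset.sum_ite_eq', mul_ite] using h0
  · intro hu v hv
    rw [direction_affineSpan, vectorSpan_def] at hv
    induction hv using Submodule.span_induction with
    | mem w hw =>
      obtain ⟨η₁, h₁, η₀, h₀, rfl⟩ := hw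
      have hsplit : dotp u (η₁ -ᵥ η₀) = ∑ c ∈ B, ∑ j ∈ c, u j * (η₁ j - η₀ j) :=
        partition_sum B hdisj hcover _
      rw [hsplit]
      apply Finset.sum_eq_zero
      intro c hc
      by_cases hxc : ∀ j ∈ c, x j = 0
      · exact Finset.sum_eq_zero fun j hj => by rw [hu c hc hxc j hj]; ring
      · have hrc : Real.sqrt (∑ k ∈ c, x k ^ 2) ≠ 0 := fun h =>
          hxc ((sqrt_sum_sq_eq_zero_iff c x).mp h)
        apply Finset.sum_eq_zero
        intro j hj
        rw [nec_eq B hdisj hcover J hJ x η₁ h₁ c hc hrc j hj,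
          nec_eq B hdisj hcover J hJ x η₀ h₀ c hc hrc j hj]
        ring
    | zero => simp [dotp]
    | add v w _ _ ihv ihw => rw [dotp_add_right, ihv, ihw]; ring
    | smul c v _ ihv => rw [dotp_smul_right, ihv]; ring
end

section
/- Let J : ℝ^N → ℝ be a finite-valued convex function, Φ : ℝ^N → ℝ^P linear, and x₀ ∈ ℝ^N. Assume ker(Φ) ∩ T_{x₀} = {0} and that there exists η ∈ Im(Φ^*) ∩ ri(∂J(x₀)). Fix c > 0. Then there exists a constant C > 0 such that for every w ∈ ℝ^P with w ≠ 0, setting y = Φx₀ + w and λ = c‖w‖, every minimizer x⋆ of x ↦ (1/(2λ))‖Φx − y‖² + J(x) satisfies ‖x⋆ − x₀‖ ≤ C‖w‖. -/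
open Matrix

/-!
Write `d = x⋆ - x₀`, `r = Φ d - w`, `η = Φ* p`, and let `S = Lin ∂J(x₀)`, so that `T = Sᗮ`.
Since `η` lies in the relative interior, `η + v ∈ ∂J(x₀)` for all `v ∈ S` with `‖v‖ ≤ ε`;
taking `v` along the projection `P_S d` and comparing the objective at `x⋆` and `x₀` gives
`‖r‖² / (2λ) + ε ‖P_S d‖ ≤ ‖w‖² / (2λ) + ‖p‖ (‖r‖ + ‖w‖)`.
With `λ = c ‖w‖` this bounds `‖r‖` and `‖P_S d‖` linearly in `‖w‖`, hence also `‖Φ d‖`.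
Finally `Φ` is bounded below on `T` by restricted injectivity, which controls the component
`d - P_S d ∈ T`.
-/

open scoped RealInnerProductSpace

theorem exists_pos_add_mem_of_mem_intrinsicInterior {V : Type*} [NormedAddCommGroup V]
    [NormedSpace ℝ V] {s : Set V} {η : V} (hη : η ∈ intrinsicInterior ℝ s) :
    ∃ ε > 0, ∀ v ∈ (affineSpan ℝ s).direction, ‖v‖ < ε → η + v ∈ s := by
  obtain ⟨z, hz, rfl⟩ := hη
  obtain ⟨ε, hε, hball⟩ := Metric.mem_nhds_iff.1 (mem_interior_iff_mem_nhds.1 hz)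
  refine ⟨ε, hε, fun v hv hvε => ?_⟩
  have hmem : (z : V) + v ∈ affineSpan ℝ s := by
    simpa [add_comm] using AffineSubspace.vadd_mem_of_mem_direction hv z.2
  refine hball (show (⟨_, hmem⟩ : affineSpan ℝ s) ∈ Metric.ball z ε from ?_)
  simpa [Subtype.dist_eq, dist_eq_norm] using hvε

theorem LinearMap.exists_pos_norm_le_mul_norm_of_ker_inf_eq_bot {𝕜 E F : Type*}
    [NontriviallyNormedField 𝕜] [CompleteSpace 𝕜] [NormedAddCommGroup E] [NormedSpace 𝕜 E]
    [NormedAddCommGroup F] [NormedSpace 𝕜 F] [FiniteDimensional 𝕜 E] (A : E →ₗ[𝕜] F)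
    {K : Submodule 𝕜 E} (h : LinearMap.ker A ⊓ K = ⊥) :
    ∃ C > 0, ∀ u ∈ K, ‖u‖ ≤ C * ‖A u‖ := by
  have hker : LinearMap.ker (A.domRestrict K) = ⊥ := by
    rw [LinearMap.ker_domRestrict, ← Submodule.disjoint_iff_comap_eq_bot]
    exact (disjoint_iff.2 h).symm
  obtain ⟨C, hC, hanti⟩ := (A.domRestrict K).exists_antilipschitzWith hker
  exact ⟨C, hC, fun u hu => hanti.le_mul_norm (map_zero _) ⟨u, hu⟩⟩

theorem le_mul_of_residual_energy_le {a b q m c ε : ℝ} (ha : 0 ≤ a) (hb : 0 < b) (hq : 0 ≤ q)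
    (hm : 0 ≤ m) (hc : 0 < c) (hε : 0 < ε)
    (h : 1 / (2 * (c * b)) * a ^ 2 + ε * q ≤ 1 / (2 * (c * b)) * b ^ 2 + m * (a + b)) :
    a ≤ (2 * c * m + 1) * b ∧ q ≤ (1 / (2 * c) + m * (2 * c * m + 2)) / ε * b := by
  have hcb : 0 < 2 * (c * b) := by positivity
  have hcleared : a ^ 2 + 2 * (c * b) * (ε * q) ≤ b ^ 2 + 2 * (c * b) * (m * (a + b)) := by
    have := mul_le_mul_of_nonneg_left h hcb.le
    field_simp at this
    linarith
  have hres : a ≤ (2 * c * m + 1) * b := by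
    have hfac : (a - (2 * c * m + 1) * b) * (a + b) ≤ 0 := by
      nlinarith [mul_nonneg hcb.le (mul_nonneg hε.le hq)]
    nlinarith
  refine ⟨hres, ?_⟩
  rw [div_mul_eq_mul_div, le_div_iff₀ hε]
  have hb2 : 1 / (2 * (c * b)) * b ^ 2 = 1 / (2 * c) * b := by field_simp
  nlinarith [mul_nonneg (one_div_pos.2 hcb).le (sq_nonneg a)]

section
variable {E F : Type*} [NormedAddCommGroup E] [InnerProductSpace ℝ E]
  [NormedAddCommGroup F] [InnerProductSpace ℝ F]

theorem Submodule.add_inner_add_mul_norm_starProjection_le (S : Submodule ℝ E)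
    [S.HasOrthogonalProjection] {J : E → ℝ} {x₀ η : E} {ε : ℝ} (hε : 0 ≤ ε)
    (hsub : ∀ v ∈ S, ‖v‖ ≤ ε → ∀ d, J x₀ + ⟪η + v, d⟫ ≤ J (x₀ + d)) (d : E) :
    J x₀ + ⟪η, d⟫ + ε * ‖S.starProjection d‖ ≤ J (x₀ + d) := by
  set q := S.starProjection d
  have hqS : q ∈ S := S.starProjection_apply_mem d
  rcases eq_or_ne q 0 with hq | hq
  · simpa [hq] using hsub 0 S.zero_mem (by simpa using hε) d
  have hqd : ⟪q, d⟫ = ‖q‖ ^ 2 := by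
    rw [← real_inner_self_eq_norm_sq, ← Submodule.inner_starProjection_left_eq_right,
      S.starProjection_eq_self_iff.2 hqS]
  have hq' : ‖q‖ ≠ 0 := norm_ne_zero_iff.2 hq
  have hv : ‖(ε / ‖q‖) • q‖ = ε := by
    rw [norm_smul, Real.norm_eq_abs, abs_div, abs_norm, abs_of_nonneg hε, div_mul_cancel₀ _ hq']
  have := hsub _ (S.smul_mem _ hqS) hv.le d
  rwa [inner_add_left, real_inner_smul_left, hqd, pow_two, ← mul_assoc, div_mul_cancel₀ _ hq',
    ← add_assoc] at this

theorem Submodule.norm_le_of_forall_mem_orthogonal (S : Submodule ℝ E)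
    [S.HasOrthogonalProjection] (A : E →ₗ[ℝ] F) {C M : ℝ} (hC : 0 ≤ C)
    (hA : ∀ u ∈ Sᗮ, ‖u‖ ≤ C * ‖A u‖) (hM : ∀ u, ‖A u‖ ≤ M * ‖u‖) (d : E) :
    ‖d‖ ≤ C * (‖A d‖ + M * ‖S.starProjection d‖) + ‖S.starProjection d‖ := by
  have hperp := hA _ (S.sub_starProjection_mem_orthogonal d)
  have hAperp : ‖A (d - S.starProjection d)‖ ≤ ‖A d‖ + M * ‖S.starProjection d‖ := by
    rw [map_sub]
    exact (norm_sub_le _ _).trans (add_le_add_right (hM _) _)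
  calc ‖d‖ = ‖(d - S.starProjection d) + S.starProjection d‖ := by rw [sub_add_cancel]
    _ ≤ ‖d - S.starProjection d‖ + ‖S.starProjection d‖ := norm_add_le _ _
    _ ≤ C * (‖A d‖ + M * ‖S.starProjection d‖) + ‖S.starProjection d‖ := by
      gcongr; exact hperp.trans (mul_le_mul_of_nonneg_left hAperp hC)

variable [FiniteDimensional ℝ E] [FiniteDimensional ℝ F]

theorem residual_energy_le (A : E →ₗ[ℝ] F) (S : Submodule ℝ E) {J : E → ℝ} {x₀ : E} {p : F}
    {ε : ℝ} (hε : 0 ≤ ε)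
    (hsub : ∀ v ∈ S, ‖v‖ ≤ ε → ∀ d, J x₀ + ⟪LinearMap.adjoint A p + v, d⟫ ≤ J (x₀ + d))
    {μ : ℝ} {w : F} {xs : E}
    (hmin : μ * ‖A xs - (A x₀ + w)‖ ^ 2 + J xs ≤ μ * ‖A x₀ - (A x₀ + w)‖ ^ 2 + J x₀) :
    μ * ‖A (xs - x₀) - w‖ ^ 2 + ε * ‖S.starProjection (xs - x₀)‖ ≤
      μ * ‖w‖ ^ 2 + ‖p‖ * (‖A (xs - x₀) - w‖ + ‖w‖) := by
  have hJ := S.add_inner_add_mul_norm_starProjection_le hε hsub (xs - x₀)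
  rw [add_sub_cancel, LinearMap.adjoint_inner_left] at hJ
  have hres : A xs - (A x₀ + w) = A (xs - x₀) - w := by rw [map_sub]; abel
  have hres₀ : A x₀ - (A x₀ + w) = -w := by abel
  rw [hres, hres₀, norm_neg] at hmin
  have hinner : -(‖p‖ * (‖A (xs - x₀) - w‖ + ‖w‖)) ≤ ⟪p, A (xs - x₀)⟫ := by
    have hsplit : ⟪p, A (xs - x₀)⟫ = ⟪p, A (xs - x₀) - w⟫ + ⟪p, w⟫ := by
      rw [← inner_add_right, sub_add_cancel]
    rw [hsplit]
    nlinarith [neg_abs_le ⟪p, A (xs - x₀) - w⟫, neg_abs_le ⟪p, w⟫,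
      abs_real_inner_le_norm p (A (xs - x₀) - w), abs_real_inner_le_norm p w]
  linarith

theorem exists_norm_sub_le_mul_norm_of_minimizer (A : E →ₗ[ℝ] F) (S : Submodule ℝ E)
    (J : E → ℝ) (x₀ : E) (p : F) (hker : LinearMap.ker A ⊓ Sᗮ = ⊥) {ε : ℝ} (hε : 0 < ε)
    (hsub : ∀ v ∈ S, ‖v‖ ≤ ε → ∀ d, J x₀ + ⟪LinearMap.adjoint A p + v, d⟫ ≤ J (x₀ + d))
    {c : ℝ} (hc : 0 < c) :
    ∃ C > 0, ∀ w : F, w ≠ 0 → ∀ xs : E,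
      (∀ x, 1 / (2 * (c * ‖w‖)) * ‖A xs - (A x₀ + w)‖ ^ 2 + J xs ≤
        1 / (2 * (c * ‖w‖)) * ‖A x - (A x₀ + w)‖ ^ 2 + J x) →
      ‖xs - x₀‖ ≤ C * ‖w‖ := by
  obtain ⟨C₁, hC₁, hinj⟩ := A.exists_pos_norm_le_mul_norm_of_ker_inf_eq_bot hker
  set M := ‖LinearMap.toContinuousLinearMap A‖
  set K := (1 / (2 * c) + ‖p‖ * (2 * c * ‖p‖ + 2)) / ε
  have hK : 0 ≤ K := by positivity
  refine ⟨C₁ * (2 * c * ‖p‖ + 2 + M * K) + K, by positivity, fun w hw xs hmin => ?_⟩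
  have hw : 0 < ‖w‖ := norm_pos_iff.2 hw
  obtain ⟨hres, hproj⟩ := le_mul_of_residual_energy_le (norm_nonneg _) hw (norm_nonneg _)
    (norm_nonneg p) hc hε (residual_energy_le A S hε.le hsub (hmin x₀))
  have hAd : ‖A (xs - x₀)‖ ≤ (2 * c * ‖p‖ + 2) * ‖w‖ := by
    calc ‖A (xs - x₀)‖ = ‖(A (xs - x₀) - w) + w‖ := by rw [sub_add_cancel]
      _ ≤ ‖A (xs - x₀) - w‖ + ‖w‖ := norm_add_le _ _
      _ ≤ (2 * c * ‖p‖ + 2) * ‖w‖ := by linarith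
  have hsplit := S.norm_le_of_forall_mem_orthogonal A hC₁.le hinj
    (LinearMap.toContinuousLinearMap A).le_opNorm (xs - x₀)
  calc ‖xs - x₀‖
      ≤ C₁ * (‖A (xs - x₀)‖ + M * ‖S.starProjection (xs - x₀)‖) +
          ‖S.starProjection (xs - x₀)‖ := hsplit
    _ ≤ C₁ * ((2 * c * ‖p‖ + 2) * ‖w‖ + M * (K * ‖w‖)) + K * ‖w‖ := by gcongr
    _ = (C₁ * (2 * c * ‖p‖ + 2 + M * K) + K) * ‖w‖ := by ring

end

noncomputable def linSubdiff {n : ℕ} (J : (Fin n → ℝ) → ℝ) (x : Fin n → ℝ) :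
    Submodule ℝ (EuclideanSpace ℝ (Fin n)) :=
  (affineSpan ℝ (subdiff J x)).direction.comap (WithLp.linearEquiv 2 ℝ (Fin n → ℝ)).toLinearMap

section Euclidean
variable {n : ℕ}

theorem nrm2_eq_norm_toLp (u : Fin n → ℝ) : nrm2 u = ‖WithLp.toLp 2 u‖ := by
  simp [nrm2, EuclideanSpace.norm_eq]

theorem dotp_eq_inner_toLp (u v : Fin n → ℝ) :
    dotp u v = ⟪WithLp.toLp 2 u, WithLp.toLp 2 v⟫ := by
  simp [dotp, EuclideanSpace.inner_toLp_toLp, dotProduct, mul_comm]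

theorem toLp_mem_orthogonal_linSubdiff_iff {J : (Fin n → ℝ) → ℝ} {x u : Fin n → ℝ} :
    WithLp.toLp 2 u ∈ (linSubdiff J x)ᗮ ↔ u ∈ modelT J x := by
  refine ⟨fun h v hv => ?_, fun h v hv => ?_⟩
  · rw [dotp_eq_inner_toLp, real_inner_comm]
    exact h (WithLp.toLp 2 v) hv
  · rw [real_inner_comm, ← WithLp.toLp_ofLp 2 v, ← dotp_eq_inner_toLp]
    exact h _ hv

theorem ker_toEuclideanLin_inf_orthogonal_linSubdiff_eq_bot {m : ℕ} {J : (Fin n → ℝ) → ℝ}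
    {x₀ : Fin n → ℝ} {Φ : Matrix (Fin m) (Fin n) ℝ}
    (hker : {x : Fin n → ℝ | Φ.mulVec x = 0} ∩ modelT J x₀ = {0}) :
    LinearMap.ker (Matrix.toEuclideanLin Φ) ⊓ (linSubdiff J x₀)ᗮ = ⊥ := by
  refine (Submodule.eq_bot_iff _).2 fun u ⟨huker, huperp⟩ => ?_
  have hmem : WithLp.ofLp u ∈ {x : Fin n → ℝ | Φ.mulVec x = 0} ∩ modelT J x₀ :=
    ⟨congrArg WithLp.ofLp huker, toLp_mem_orthogonal_linSubdiff_iff.1 huperp⟩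
  rw [hker] at hmem
  exact congrArg (WithLp.toLp 2) hmem

theorem adjoint_toEuclideanLin_toLp {m : ℕ} (Φ : Matrix (Fin m) (Fin n) ℝ) (p : Fin m → ℝ) :
    LinearMap.adjoint (Matrix.toEuclideanLin Φ) (WithLp.toLp 2 p) =
      WithLp.toLp 2 (Φᵀ.mulVec p) := by
  rw [← Matrix.toEuclideanLin_conjTranspose_eq_adjoint,
    Matrix.conjTranspose_eq_transpose_of_trivial]
  rfl

theorem exists_pos_forall_subgradient_of_mem_intrinsicInterior {J : (Fin n → ℝ) → ℝ}
    {x₀ η : Fin n → ℝ} (hη : η ∈ intrinsicInterior ℝ (subdiff J x₀)) :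
    ∃ ε > 0, ∀ v ∈ linSubdiff J x₀, ‖v‖ ≤ ε → ∀ d : EuclideanSpace ℝ (Fin n),
      J x₀ + ⟪WithLp.toLp 2 η + v, d⟫ ≤ J (x₀ + WithLp.ofLp d) := by
  obtain ⟨ε, hε, hball⟩ := exists_pos_add_mem_of_mem_intrinsicInterior hη
  refine ⟨ε / 2, half_pos hε, fun v hv hvε d => ?_⟩
  have hsup : ‖WithLp.ofLp v‖ < ε :=
    ((pi_norm_le_iff_of_nonneg (norm_nonneg v)).2 fun i => PiLp.norm_apply_le v i).trans_lt
      (hvε.trans_lt (half_lt_self hε))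
  simpa [dotp_eq_inner_toLp] using hball _ hv hsup (WithLp.ofLp d)

end Euclidean

theorem stmt5_general {N P : ℕ} (J : (Fin N → ℝ) → ℝ)
    (Φ : Matrix (Fin P) (Fin N) ℝ) (x₀ : Fin N → ℝ)
    (hker : {x : Fin N → ℝ | Φ.mulVec x = 0} ∩ modelT J x₀ = {0})
    (hcert : ∃ η ∈ intrinsicInterior ℝ (subdiff J x₀), ∃ p : Fin P → ℝ, η = Φᵀ.mulVec p)
    (c : ℝ) (hc : 0 < c) :
    ∃ C > (0:ℝ), ∀ w : Fin P → ℝ, w ≠ 0 →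
      ∀ xs : Fin N → ℝ,
        (∀ x, (1 / (2 * (c * nrm2 w))) * nrm2 (Φ.mulVec xs - (Φ.mulVec x₀ + w)) ^ 2 + J xs ≤
              (1 / (2 * (c * nrm2 w))) * nrm2 (Φ.mulVec x - (Φ.mulVec x₀ + w)) ^ 2 + J x) →
        nrm2 (xs - x₀) ≤ C * nrm2 w := by
  obtain ⟨η, hη, p, rfl⟩ := hcert
  obtain ⟨ε, hε, hsub⟩ := exists_pos_forall_subgradient_of_mem_intrinsicInterior hη
  rw [← adjoint_toEuclideanLin_toLp] at hsub
  obtain ⟨C, hC, hstable⟩ := exists_norm_sub_le_mul_norm_of_minimizer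
    (Matrix.toEuclideanLin Φ)
    (linSubdiff J x₀) (J ∘ WithLp.ofLp) (WithLp.toLp 2 x₀) (WithLp.toLp 2 p)
    (ker_toEuclideanLin_inf_orthogonal_linSubdiff_eq_bot hker) hε hsub hc
  refine ⟨C, hC, fun w hw xs hmin => ?_⟩
  simp only [nrm2_eq_norm_toLp] at hmin ⊢
  exact hstable (WithLp.toLp 2 w) (by simpa using hw) (WithLp.toLp 2 xs) fun x => by
    simpa [Matrix.toLpLin_apply] using hmin (WithLp.ofLp x)

/-- linear convergence rate (ℓ² stability). Under the restricted
injectivity condition `ker(Φ) ∩ T_{x₀} = {0}` and existence of a non-degenerate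
dual certificate `η ∈ Im(Φ^*) ∩ ri(∂J(x₀))`, for the choice `λ = c‖w‖` every
minimizer `x⋆` of `(1/(2λ))‖Φx − (Φx₀ + w)‖² + J(x)` satisfies
`‖x⋆ − x₀‖ ≤ C‖w‖`. -/
theorem stmt5 {N P : ℕ} (J : (Fin N → ℝ) → ℝ) (hJ : ConvexOn ℝ Set.univ J)
    (Φ : Matrix (Fin P) (Fin N) ℝ) (x₀ : Fin N → ℝ)
    (hker : {x : Fin N → ℝ | Φ.mulVec x = 0} ∩ modelT J x₀ = {0})
    (hcert : ∃ η ∈ intrinsicInterior ℝ (subdiff J x₀), ∃ p : Fin P → ℝ, η = Φᵀ.mulVec p)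
    (c : ℝ) (hc : 0 < c) :
    ∃ C > (0:ℝ), ∀ w : Fin P → ℝ, w ≠ 0 →
      ∀ xs : Fin N → ℝ,
        (∀ x, (1 / (2 * (c * nrm2 w))) * nrm2 (Φ.mulVec xs - (Φ.mulVec x₀ + w)) ^ 2 + J xs ≤
              (1 / (2 * (c * nrm2 w))) * nrm2 (Φ.mulVec x - (Φ.mulVec x₀ + w)) ^ 2 + J x) →
        nrm2 (xs - x₀) ≤ C * nrm2 w :=
  stmt5_general J Φ x₀ hker hcert c hc
end

section
/- Let J : ℝ^N → ℝ be a finite-valued convex function, Φ : ℝ^N → ℝ^P linear, and x₀ ∈ ℝ^N. If ker(Φ) ∩ T_{x₀} = {0} and there exists η ∈ Im(Φ^*) ∩ ri(∂J(x₀)), then x₀ is the unique minimizer of J over the affine set {x ∈ ℝ^N : Φx = Φx₀}. -/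
open Matrix

lemma dotp_add_left {n : ℕ} (u v w : Fin n → ℝ) :
    dotp (u + v) w = dotp u w + dotp v w := by
  simp [dotp, add_mul, Finset.sum_add_distrib]

lemma dotp_sub_left {n : ℕ} (u v w : Fin n → ℝ) :
    dotp (u - v) w = dotp u w - dotp v w := by
  simp [dotp, sub_mul, Finset.sum_sub_distrib]

lemma dotp_smul_left {n : ℕ} (t : ℝ) (u w : Fin n → ℝ) :
    dotp (t • u) w = t * dotp u w := by
  simp [dotp, Finset.mul_sum, mul_assoc]

lemma dotp_comm {n : ℕ} (u v : Fin n → ℝ) : dotp u v = dotp v u := by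
  simp [dotp, mul_comm]

lemma extend_mem {n : ℕ} {S : Set (Fin n → ℝ)} {η : Fin n → ℝ}
    (hη : η ∈ intrinsicInterior ℝ S) {η' : Fin n → ℝ} (hη' : η' ∈ S) :
    ∃ t : ℝ, 0 < t ∧ t • (η - η') + η ∈ S := by
  obtain ⟨y, hy, hyeq⟩ := mem_intrinsicInterior.mp hη
  have hη'A : η' ∈ affineSpan ℝ S := subset_affineSpan ℝ S hη'
  have hmem : ∀ t : ℝ, t • (η - η') + η ∈ affineSpan ℝ S := by
    intro t
    have := AffineSubspace.smul_vsub_vadd_mem (affineSpan ℝ S) t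
      (hyeq ▸ y.2) hη'A (hyeq ▸ y.2)
    simpa [vsub_eq_sub, vadd_eq_add] using this
  set f : ℝ → affineSpan ℝ S := fun t => ⟨t • (η - η') + η, hmem t⟩ with hf
  have hcont : Continuous f := by
    apply Continuous.subtype_mk
    fun_prop
  have hopen : IsOpen (f ⁻¹' interior ((↑) ⁻¹' S : Set (affineSpan ℝ S))) :=
    isOpen_interior.preimage hcont
  have h0 : (0 : ℝ) ∈ f ⁻¹' interior ((↑) ⁻¹' S : Set (affineSpan ℝ S)) := by
    have : f 0 = y := by
      apply Subtype.ext
      simp [hf, hyeq]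
    simpa [this] using hy
  obtain ⟨ε, hε, hball⟩ := Metric.isOpen_iff.mp hopen 0 h0
  refine ⟨ε / 2, by linarith, ?_⟩
  have h2 : f (ε / 2) ∈ interior ((↑) ⁻¹' S : Set (affineSpan ℝ S)) := by
    apply hball
    simp only [Metric.mem_ball, Real.dist_eq, sub_zero]
    rw [abs_of_pos (by linarith : (0:ℝ) < ε/2)]
    linarith
  have h3 : f (ε / 2) ∈ ((↑) ⁻¹' S : Set (affineSpan ℝ S)) := interior_subset h2
  simpa [hf] using h3

/-- under the restricted injectivity condition and existence of a
non-degenerate dual certificate, `x₀` is the unique minimizer of `J` over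
`{x : Φx = Φx₀}`. -/
theorem stmt6 {N P : ℕ} (J : (Fin N → ℝ) → ℝ) (hJ : ConvexOn ℝ Set.univ J)
    (Φ : Matrix (Fin P) (Fin N) ℝ) (x₀ : Fin N → ℝ)
    (hker : {x : Fin N → ℝ | Φ.mulVec x = 0} ∩ modelT J x₀ = {0})
    (hcert : ∃ η ∈ intrinsicInterior ℝ (subdiff J x₀), ∃ p : Fin P → ℝ, η = Φᵀ.mulVec p) :
    ∀ x, Φ.mulVec x = Φ.mulVec x₀ → x ≠ x₀ → J x₀ < J x := by
  obtain ⟨η, hη, p, hηp⟩ := hcert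
  intro x hx hne
  set δ : Fin N → ℝ := x - x₀ with hδ
  have hΦδ : Φ.mulVec δ = 0 := by
    simp [hδ, Matrix.mulVec_sub, hx]
  have hηδ : dotp η δ = 0 := by
    have : dotp η δ = p ⬝ᵥ Φ.mulVec δ := by
      rw [hηp]
      simp only [dotp, Matrix.mulVec_transpose]
      rw [show ∑ x : Fin N, (p ᵥ* Φ) x * δ x = (p ᵥ* Φ) ⬝ᵥ δ from rfl,
        ← Matrix.dotProduct_mulVec]
    rw [this, hΦδ, dotProduct_zero]
  have hηS : η ∈ subdiff J x₀ := intrinsicInterior_subset hη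
  have hxδ : x₀ + δ = x := by simp [hδ]
  have hle : J x₀ ≤ J x := by
    have := hηS δ
    rw [hxδ, hηδ] at this
    linarith
  rcases lt_or_eq_of_le hle with h | heq
  · exact h
  -- contradiction case : J x = J x₀
  exfalso
  have hall : ∀ η' ∈ subdiff J x₀, dotp η' δ = 0 := by
    intro η' hη'
    have hle' : dotp η' δ ≤ 0 := by
      have := hη' δ
      rw [hxδ, ← heq] at this
      linarith
    obtain ⟨t, ht, htmem⟩ := extend_mem hη hη'
    have := htmem δ
    rw [hxδ, ← heq] at this
    have h2 : dotp (t • (η - η') + η) δ ≤ 0 := by linarith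
    rw [dotp_add_left, dotp_smul_left, dotp_sub_left, hηδ] at h2
    nlinarith
  have hδT : δ ∈ modelT J x₀ := by
    intro v hv
    rw [direction_affineSpan] at hv
    induction hv using Submodule.span_induction with
    | mem z hz =>
        obtain ⟨a, ha, b, hb, rfl⟩ := hz
        show dotp δ (a -ᵥ b) = 0
        rw [vsub_eq_sub, dotp_comm, dotp_sub_left, hall a ha, hall b hb, sub_zero]
    | zero => simp [dotp]
    | add y z _ _ hy hz =>
        show dotp δ (y + z) = 0
        rw [dotp_comm, dotp_add_left, dotp_comm y, dotp_comm z, hy, hz, add_zero]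
    | smul t y _ hy =>
        show dotp δ (t • y) = 0
        rw [dotp_comm, dotp_smul_left, dotp_comm, hy, mul_zero]
  have hδ0 : δ ∈ ({0} : Set (Fin N → ℝ)) := by
    rw [← hker]
    exact ⟨hΦδ, hδT⟩
  apply hne
  have : δ = 0 := hδ0
  have := sub_eq_zero.mp this
  exact this
end

section
/- Let J : ℝ^N → ℝ be a finite-valued convex function, Φ : ℝ^N → ℝ^P linear, and x₀ ∈ ℝ^N with Im(Φ^*) ∩ ∂J(x₀) ≠ ∅ and ker(Φ) ∩ T_{x₀} = {0}. Let p₀ be the unique minimal-Euclidean-norm element of {p ∈ ℝ^P : Φ^*p ∈ ∂J(x₀)} and set η₀ = Φ^*p₀ (the minimal-norm certificate); let p_F be the unique minimal-Euclidean-norm element of {p ∈ ℝ^P : Φ^*p ∈ aff(∂J(x₀))} and set η_F = Φ^*p_F (the linearized pre-certificate). Then: (i) if η_F ∈ ri(∂J(x₀)) then η_F = η₀; and (ii) if η₀ ∈ ri(∂J(x₀)) then η_F = η₀. -/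
open Matrix

/-!
Both certificates come from norm minimizers over nested feasible sets
`K = {p : Φ^*p ∈ ∂J(x₀)} ⊆ L = {p : Φ^*p ∈ aff ∂J(x₀)}`. If `η_F ∈ ∂J(x₀)`, then `p_F` is feasible
for the smaller problem and the two unique minimizers coincide. If `η₀ ∈ ri ∂J(x₀)`, the segment
from `p₀` to any point `q ∈ L` starts inside `K`; were `‖q‖ < ‖p₀‖`, convexity of the norm would
put the points of that initial piece below `‖p₀‖` too. Hence `p₀` minimizes the norm over `L` as well.
-/

open Set Filter Topology

lemma nrm2_eq_norm {n : ℕ} (u : Fin n → ℝ) : nrm2 u = ‖WithLp.toLp 2 u‖ := by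
  simp [nrm2, EuclideanSpace.norm_eq]

lemma convexOn_nrm2 {n : ℕ} : ConvexOn ℝ univ (nrm2 (n := n)) := by
  have := (convexOn_univ_norm (E := EuclideanSpace ℝ (Fin n))).comp_linearMap
    (WithLp.linearEquiv 2 ℝ (Fin n → ℝ)).symm.toLinearMap
  simpa [Function.comp_def, ← nrm2_eq_norm] using this

section StrictMinimizer

variable {α β : Type*} {f : α → β} {s : Set α} {a b : α}

lemma isMinOn_of_forall_ne_lt [Preorder β] (hb : ∀ q ∈ s, q ≠ b → f b < f q) :
    IsMinOn f s b :=
  isMinOn_iff.mpr fun q hq => (eq_or_ne q b).elim (fun h => h ▸ le_rfl) fun h => (hb q hq h).le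

lemma IsMinOn.eq_of_forall_ne_lt [Preorder β] (ha : IsMinOn f s a) (has : a ∈ s) (hbs : b ∈ s)
    (hb : ∀ q ∈ s, q ≠ b → f b < f q) : a = b := by
  by_contra h
  exact (hb a has h).not_ge (ha hbs)

end StrictMinimizer

lemma eventually_lineMap_mem_of_mem_intrinsicInterior {V : Type*} [AddCommGroup V] [Module ℝ V]
    [TopologicalSpace V] [IsTopologicalAddGroup V] [ContinuousSMul ℝ V] {C : Set V} {x y : V}
    (hx : x ∈ intrinsicInterior ℝ C) (hy : y ∈ affineSpan ℝ C) :
    ∀ᶠ t in 𝓝 (0 : ℝ), AffineMap.lineMap x y t ∈ C := by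
  obtain ⟨z, hz, rfl⟩ := hx
  let g : ℝ → affineSpan ℝ C :=
    fun t => ⟨AffineMap.lineMap (z : V) y t, AffineMap.lineMap_mem t z.2 hy⟩
  have hg : Continuous g := AffineMap.lineMap_continuous.subtype_mk _
  have hg0 : g 0 = z := Subtype.ext (AffineMap.lineMap_apply_zero _ _)
  exact hg.continuousAt.preimage_mem_nhds (hg0 ▸ mem_interior_iff_mem_nhds.mp hz)

lemma ConvexOn.isMinOn_preimage_affineSpan {E F : Type*} [AddCommGroup E] [Module ℝ E]
    [AddCommGroup F] [Module ℝ F] [TopologicalSpace F] [IsTopologicalAddGroup F]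
    [ContinuousSMul ℝ F] {f : E → ℝ} (hf : ConvexOn ℝ univ f) (A : E →ₗ[ℝ] F) {C : Set F}
    {p : E} (hmin : IsMinOn f (A ⁻¹' C) p) (hp : A p ∈ intrinsicInterior ℝ C) :
    IsMinOn f (A ⁻¹' affineSpan ℝ C) p := by
  refine isMinOn_iff.mpr fun q hq => ?_
  by_contra! hlt
  have hev : ∀ᶠ t in 𝓝[>] (0 : ℝ), AffineMap.lineMap (A p) (A q) t ∈ C :=
    (eventually_lineMap_mem_of_mem_intrinsicInterior hp hq).filter_mono nhdsWithin_le_nhds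
  obtain ⟨t, htC, ht0, ht1⟩ := (hev.and (Ioo_mem_nhdsGT zero_lt_one)).exists
  have hA : A (AffineMap.lineMap p q t) = AffineMap.lineMap (A p) (A q) t :=
    A.toAffineMap.apply_lineMap p q t
  have hle := isMinOn_iff.mp hmin _ (show A _ ∈ C from hA ▸ htC)
  have hconv := hf.2 (mem_univ p) (mem_univ q) (sub_nonneg.2 ht1.le) ht0.le (sub_add_cancel 1 t)
  rw [AffineMap.lineMap_apply_module] at hle
  simp only [smul_eq_mul] at hconv
  nlinarith

theorem stmt7_general {N P : ℕ} (J : (Fin N → ℝ) → ℝ)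
    (Φ : Matrix (Fin P) (Fin N) ℝ) (x₀ : Fin N → ℝ)
    (p₀ pF : Fin P → ℝ)
    (hp₀mem : Φᵀ.mulVec p₀ ∈ subdiff J x₀)
    (hp₀min : ∀ q : Fin P → ℝ, Φᵀ.mulVec q ∈ subdiff J x₀ → q ≠ p₀ → nrm2 p₀ < nrm2 q)
    (hpFmem : Φᵀ.mulVec pF ∈ affineSpan ℝ (subdiff J x₀))
    (hpFmin : ∀ q : Fin P → ℝ, Φᵀ.mulVec q ∈ affineSpan ℝ (subdiff J x₀) → q ≠ pF →
      nrm2 pF < nrm2 q) :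
    (Φᵀ.mulVec pF ∈ intrinsicInterior ℝ (subdiff J x₀) → Φᵀ.mulVec pF = Φᵀ.mulVec p₀) ∧
    (Φᵀ.mulVec p₀ ∈ intrinsicInterior ℝ (subdiff J x₀) → Φᵀ.mulVec pF = Φᵀ.mulVec p₀) := by
  set A := Φᵀ.mulVecLin
  set K := A ⁻¹' subdiff J x₀
  have hp₀aff : p₀ ∈ A ⁻¹' affineSpan ℝ (subdiff J x₀) := mem_affineSpan ℝ hp₀mem
  refine ⟨fun hpF => congrArg A ?_, fun hp₀ => congrArg A ?_⟩
  · have hpF_min : IsMinOn nrm2 K pF :=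
      (isMinOn_of_forall_ne_lt hpFmin).on_subset (preimage_mono (subset_affineSpan ℝ _))
    exact hpF_min.eq_of_forall_ne_lt (intrinsicInterior_subset (s := subdiff J x₀) hpF) hp₀mem
      hp₀min
  · have hp₀_min := convexOn_nrm2.isMinOn_preimage_affineSpan A
      (isMinOn_of_forall_ne_lt (s := K) hp₀min) hp₀
    exact (hp₀_min.eq_of_forall_ne_lt hp₀aff hpFmem hpFmin).symm

/-- relationship between the minimal-norm certificate `η₀ = Φ^*p₀`
and the linearized pre-certificate `η_F = Φ^*p_F`: if either of them lies in
`ri(∂J(x₀))`, then `η_F = η₀`. -/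
theorem stmt7 {N P : ℕ} (J : (Fin N → ℝ) → ℝ) (hJ : ConvexOn ℝ Set.univ J)
    (Φ : Matrix (Fin P) (Fin N) ℝ) (x₀ : Fin N → ℝ)
    (hD : ({η : Fin N → ℝ | ∃ p : Fin P → ℝ, η = Φᵀ.mulVec p} ∩ subdiff J x₀).Nonempty)
    (hker : {x : Fin N → ℝ | Φ.mulVec x = 0} ∩ modelT J x₀ = {0})
    (p₀ pF : Fin P → ℝ)
    (hp₀mem : Φᵀ.mulVec p₀ ∈ subdiff J x₀)
    (hp₀min : ∀ q : Fin P → ℝ, Φᵀ.mulVec q ∈ subdiff J x₀ → q ≠ p₀ → nrm2 p₀ < nrm2 q)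
    (hpFmem : Φᵀ.mulVec pF ∈ affineSpan ℝ (subdiff J x₀))
    (hpFmin : ∀ q : Fin P → ℝ, Φᵀ.mulVec q ∈ affineSpan ℝ (subdiff J x₀) → q ≠ pF →
      nrm2 pF < nrm2 q) :
    (Φᵀ.mulVec pF ∈ intrinsicInterior ℝ (subdiff J x₀) → Φᵀ.mulVec pF = Φᵀ.mulVec p₀) ∧
    (Φᵀ.mulVec p₀ ∈ intrinsicInterior ℝ (subdiff J x₀) → Φᵀ.mulVec pF = Φᵀ.mulVec p₀) :=
  stmt7_general J Φ x₀ p₀ pF hp₀mem hp₀min hpFmem hpFmin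
end

section
/- Let Φ : ℝ^N → ℝ^P be linear with columns φ₁,…,φ_N, let x₀ ∈ ℝ^N with support I = supp(x₀), and assume the family (φ_i)_{i∈I} is linearly independent. Then the unique minimal-Euclidean-norm element of {p ∈ ℝ^P : Φ^*p ∈ aff(∂‖·‖₁(x₀))} is p_F = Φ_I (Φ_I^⊤ Φ_I)^{-1} sign(x₀)_I, where Φ_I is the submatrix of Φ formed by the columns indexed by I and sign(x₀)_I ∈ ℝ^{|I|} is the vector of signs of the entries of x₀ on I. -/
/-!
Off the support of `x₀` the subdifferential `∂‖·‖₁(x₀)` contains a whole cube around `0`, while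
on the support it is pinned to `sign x₀`. Hence its affine hull is `{η : η_I = sign(x₀)_I}`, and
the feasible set is the affine space `{p : Φ_Iᵀ p = sign(x₀)_I}`. Linear independence makes the
Gram matrix `Φ_Iᵀ Φ_I` invertible, so `p_F` is feasible; it lies in the range of `Φ_I`, which is
orthogonal to `ker Φ_Iᵀ`, so Pythagoras gives `‖q‖² = ‖p_F‖² + ‖q - p_F‖²` for feasible `q`.
-/

open Matrix

/-- Support of `x` as a finite set of indices. -/
noncomputable def suppF {n : ℕ} (x : Fin n → ℝ) : Finset (Fin n) :=
  Finset.univ.filter fun i => x i ≠ 0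

/-- The submatrix `Φ_I` of columns of `Φ` indexed by `I`. -/
noncomputable def colsub {N P : ℕ} (Φ : Matrix (Fin P) (Fin N) ℝ) (I : Finset (Fin N)) :
    Matrix (Fin P) ↥I ℝ := Φ.submatrix id (↑)

/-- The vector `p_F = Φ_I (Φ_I^⊤ Φ_I)⁻¹ s` for a sign vector `s` on `I`. -/
noncomputable def pFvec {N P : ℕ} (Φ : Matrix (Fin P) (Fin N) ℝ) (I : Finset (Fin N))
    (s : ↥I → ℝ) : Fin P → ℝ :=
  (colsub Φ I).mulVec ((((colsub Φ I)ᵀ * (colsub Φ I))⁻¹).mulVec s)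

/-- The irrepresentable-condition quantity `‖Φ_{I^c}^⊤ Φ_I (Φ_I^⊤Φ_I)⁻¹ s‖_∞`. -/
noncomputable def ICval {N P : ℕ} (Φ : Matrix (Fin P) (Fin N) ℝ) (I : Finset (Fin N))
    (s : ↥I → ℝ) : ℝ :=
  linf ((Φ.submatrix id ((↑) : {j // j ∉ I} → Fin N))ᵀ.mulVec (pFvec Φ I s))

/-- The subdifferential of the ℓ¹ norm at `x`:
`{η : ‖η‖_∞ ≤ 1 and η_i = sign(x_i) on supp(x)}`. -/
noncomputable def l1subdiff {n : ℕ} (x : Fin n → ℝ) : Set (Fin n → ℝ) :=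
  {η | linf η ≤ 1 ∧ ∀ i, x i ≠ 0 → η i = sgn (x i)}

theorem abs_sgn_le_one (t : ℝ) : |sgn t| ≤ 1 := by
  unfold sgn; split_ifs <;> simp

theorem abs_le_l1norm {n : ℕ} (u : Fin n → ℝ) (i : Fin n) : |u i| ≤ l1norm u :=
  Finset.single_le_sum (fun j _ => abs_nonneg (u j)) (Finset.mem_univ i)

theorem sgn_mem_l1subdiff {n : ℕ} (x : Fin n → ℝ) : (fun i => sgn (x i)) ∈ l1subdiff x :=
  ⟨Real.iSup_le (fun i => abs_sgn_le_one (x i)) zero_le_one, fun _ _ => rfl⟩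

theorem mem_affineSpan_l1subdiff_iff {n : ℕ} {x η : Fin n → ℝ} :
    η ∈ affineSpan ℝ (l1subdiff x) ↔ ∀ i, x i ≠ 0 → η i = sgn (x i) := by
  constructor
  · intro hη i hi
    refine affineSpan_induction (p := fun μ => μ i = sgn (x i)) hη (fun μ hμ => hμ.2 i hi) ?_
    intro c u v w hu hv hw
    simp only [vsub_eq_sub, vadd_eq_add, Pi.add_apply, Pi.smul_apply, Pi.sub_apply,
      smul_eq_mul, hu, hv, hw]
    ring
  · intro hη
    -- Shrinking `η` towards `sgn x` by the factor `t⁻¹` lands in `∂‖·‖₁(x)`;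
    -- `η` is recovered on the line through these two points.
    set η₀ : Fin n → ℝ := fun i => sgn (x i)
    set t : ℝ := 1 + l1norm η
    have ht : 0 < t :=
      add_pos_of_pos_of_nonneg one_pos (Finset.sum_nonneg fun i _ => abs_nonneg _)
    set η₁ := AffineMap.lineMap η₀ η t⁻¹
    have hη₁_supp : ∀ i, x i ≠ 0 → η₁ i = sgn (x i) := fun i hi => by
      simp [η₁, AffineMap.lineMap_apply_module', hη i hi, η₀]
    have hη₁ : η₁ ∈ l1subdiff x := by
      refine ⟨Real.iSup_le (fun i => ?_) zero_le_one, hη₁_supp⟩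
      by_cases hi : x i = 0
      · have hη₁_off : η₁ i = η i / t := by
          simp [η₁, AffineMap.lineMap_apply_module', η₀, hi, sgn, div_eq_inv_mul]
        rw [hη₁_off, abs_div, abs_of_pos ht, div_le_one ht]
        linarith [abs_le_l1norm η i]
      · rw [hη₁_supp i hi]
        exact abs_sgn_le_one _
    have hη : η = AffineMap.lineMap η₀ η₁ t := by
      simp only [η₁, AffineMap.lineMap_apply_module', add_sub_cancel_right, smul_smul,
        mul_inv_cancel₀ ht.ne', one_smul, sub_add_cancel]
    rw [hη]
    exact AffineMap.lineMap_mem _ (subset_affineSpan ℝ _ (sgn_mem_l1subdiff x))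
      (subset_affineSpan ℝ _ hη₁)

section LeastNorm

variable {m n : Type*} [Fintype m] [Fintype n] {A : Matrix m n ℝ}

theorem mulVec_dotProduct_eq_zero_of_transpose_mulVec_eq_zero {d : m → ℝ}
    (hd : Aᵀ *ᵥ d = 0) (v : n → ℝ) : (A *ᵥ v) ⬝ᵥ d = 0 := by
  rw [dotProduct_comm, dotProduct_mulVec, ← mulVec_transpose, hd, zero_dotProduct]

variable [DecidableEq n]

noncomputable def leastNormSol (A : Matrix m n ℝ) (s : n → ℝ) : m → ℝ :=
  A *ᵥ ((Aᵀ * A)⁻¹ *ᵥ s)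

theorem isUnit_transpose_mul_self (hA : Function.Injective A.mulVec) : IsUnit (Aᵀ * A) := by
  simpa using (PosDef.conjTranspose_mul_self A hA).isUnit

theorem transpose_mulVec_leastNormSol (hA : Function.Injective A.mulVec) (s : n → ℝ) :
    Aᵀ *ᵥ leastNormSol A s = s := by
  have hdet : IsUnit (Aᵀ * A).det := (isUnit_transpose_mul_self hA).map detMonoidHom
  rw [leastNormSol, mulVec_mulVec, mulVec_mulVec, mul_nonsing_inv _ hdet, one_mulVec]

end LeastNorm

theorem nrm2_eq_sqrt_dotProduct {n : ℕ} (u : Fin n → ℝ) : nrm2 u = √(u ⬝ᵥ u) := by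
  simp [nrm2, dotProduct, sq]

theorem nrm2_lt_nrm2_add {n : ℕ} {p d : Fin n → ℝ} (hpd : p ⬝ᵥ d = 0) (hd : d ≠ 0) :
    nrm2 p < nrm2 (p + d) := by
  have hpyth : (p + d) ⬝ᵥ (p + d) = p ⬝ᵥ p + d ⬝ᵥ d := by
    rw [add_dotProduct, dotProduct_add, dotProduct_add, hpd, dotProduct_comm d p, hpd]
    ring
  rw [nrm2_eq_sqrt_dotProduct, nrm2_eq_sqrt_dotProduct, hpyth]
  have hd_pos : 0 < d ⬝ᵥ d := by simpa using dotProduct_self_star_pos_iff.mpr hd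
  exact Real.sqrt_lt_sqrt (by simpa using dotProduct_self_star_nonneg p) (by linarith)

theorem nrm2_leastNormSol_lt {P : ℕ} {n : Type*} [Fintype n] [DecidableEq n]
    {A : Matrix (Fin P) n ℝ} (hA : Function.Injective A.mulVec) {s : n → ℝ} {q : Fin P → ℝ}
    (hq : Aᵀ *ᵥ q = s) (hne : q ≠ leastNormSol A s) :
    nrm2 (leastNormSol A s) < nrm2 q := by
  set p := leastNormSol A s
  have hker : Aᵀ *ᵥ (q - p) = 0 := by
    rw [mulVec_sub, hq, transpose_mulVec_leastNormSol hA, sub_self]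
  have hp_orth : p ⬝ᵥ (q - p) = 0 :=
    mulVec_dotProduct_eq_zero_of_transpose_mulVec_eq_zero hker _
  simpa using nrm2_lt_nrm2_add hp_orth (sub_ne_zero.mpr hne)

theorem transpose_mulVec_mem_affineSpan_l1subdiff_iff {N P : ℕ} (Φ : Matrix (Fin P) (Fin N) ℝ)
    (x : Fin N → ℝ) (p : Fin P → ℝ) :
    Φᵀ *ᵥ p ∈ affineSpan ℝ (l1subdiff x) ↔
      (colsub Φ (suppF x))ᵀ *ᵥ p = fun i : suppF x => sgn (x i) := by
  rw [mem_affineSpan_l1subdiff_iff, funext_iff]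
  constructor
  · intro h i
    exact h i (Finset.mem_filter.mp i.2).2
  · intro h i hi
    exact h ⟨i, Finset.mem_filter.mpr ⟨Finset.mem_univ i, hi⟩⟩

theorem pFvec_eq_leastNormSol {N P : ℕ} (Φ : Matrix (Fin P) (Fin N) ℝ) (I : Finset (Fin N))
    (s : I → ℝ) : pFvec Φ I s = leastNormSol (colsub Φ I) s :=
  rfl

/-- with `I = supp(x₀)` and linearly independent columns `(φ_i)_{i∈I}`,
the unique minimal-Euclidean-norm element of `{p : Φ^*p ∈ aff(∂‖·‖₁(x₀))}` is
`p_F = Φ_I (Φ_I^⊤Φ_I)⁻¹ sign(x₀)_I`. -/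
theorem stmt9 {N P : ℕ} (Φ : Matrix (Fin P) (Fin N) ℝ) (x₀ : Fin N → ℝ)
    (hli : LinearIndependent ℝ (fun i : ↥(suppF x₀) => Φᵀ (i : Fin N))) :
    pFvec Φ (suppF x₀) (fun i => sgn (x₀ i)) ∈
        {p : Fin P → ℝ | Φᵀ.mulVec p ∈ affineSpan ℝ (l1subdiff x₀)} ∧
      ∀ q ∈ {p : Fin P → ℝ | Φᵀ.mulVec p ∈ affineSpan ℝ (l1subdiff x₀)},
        q ≠ pFvec Φ (suppF x₀) (fun i => sgn (x₀ i)) →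
          nrm2 (pFvec Φ (suppF x₀) (fun i => sgn (x₀ i))) < nrm2 q := by
  have hA : Function.Injective (colsub Φ (suppF x₀)).mulVec := mulVec_injective_iff.mpr hli
  simp only [Set.mem_ofPred_eq, transpose_mulVec_mem_affineSpan_l1subdiff_iff,
    pFvec_eq_leastNormSol]
  exact ⟨transpose_mulVec_leastNormSol hA _, fun q hq hne => nrm2_leastNormSol_lt hA hq hne⟩
end

section
/- (Sharpness / instability for the Lasso.) Let Φ : ℝ^N → ℝ^P with columns φ₁,…,φ_N, and x₀ ∈ ℝ^N with I = supp(x₀). Assume x₀ is the unique minimizer of ‖·‖₁ over {x : Φx = Φx₀}, that (φ_i)_{i∈I} is linearly independent, and that ‖Φ_{I^c}^⊤ Φ_I (Φ_I^⊤Φ_I)^{-1} sign(x₀)_I‖_∞ > 1. Then there exists C > 0 such that for every λ and w with 0 < λ ≤ C and ‖w‖ ≤ Cλ, setting y = Φx₀ + w, every minimizer x⋆ of min_x (1/(2λ))‖Φx − y‖² + ‖x‖₁ satisfies supp(x⋆) ⊄ supp(x₀). -/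
open Matrix

/-! If the support of a Lasso solution `xs` lay inside `I = supp x₀`, the optimality conditions
restricted to `I` and the invertibility of the Gram matrix `Φ_Iᵀ Φ_I` would give
`‖xs - x₀‖_∞ = O(λ + ‖w‖)`, so for small `λ` and `‖w‖ ≤ Cλ` the signs of `xs` and `x₀` agree
on `I`. The optimality conditions then pin down the residual,
`y - Φ xs = λ p_F + (Id - Φ_I (Φ_Iᵀ Φ_I)⁻¹ Φ_Iᵀ) w`, and the off-support condition
`‖Φ_{Iᶜ}ᵀ (y - Φ xs)‖_∞ ≤ λ` yields `λ · ICval ≤ λ + O(Cλ)`, which contradicts `ICval > 1`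
once `C` is small. -/

open Filter Topology

lemma le_of_eventually_two_mul_le {a b n : ℝ}
    (h : ∀ᶠ τ in 𝓝[>] 0, 2 * τ * a ≤ τ ^ 2 * n + 2 * τ * b) : a ≤ b := by
  have hlim : Tendsto (fun τ => b + n / 2 * τ) (𝓝[>] 0) (𝓝 b) :=
    ((continuous_const.add (continuous_const.mul continuous_id)).tendsto' 0 b
      (by simp)).mono_left nhdsWithin_le_nhds
  refine ge_of_tendsto hlim ?_
  filter_upwards [h, self_mem_nhdsWithin] with τ hτ (hτpos : 0 < τ)
  exact le_of_mul_le_mul_left (a := 2 * τ) (by linarith) (by positivity)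

lemma eventually_mul_lt (a : ℝ) {b : ℝ} (hb : 0 < b) : ∀ᶠ C in 𝓝[>] (0 : ℝ), a * C < b :=
  nhdsWithin_le_nhds <|
    ((continuous_const.mul continuous_id).tendsto' 0 0 (by simp)).eventually_lt_const hb

lemma sgn_eq_of_abs_sub_lt {a b : ℝ} (h : |a - b| < |b|) : a ≠ 0 ∧ sgn a = sgn b := by
  rcases lt_trichotomy b 0 with hb | rfl | hb
  · have ha : a < 0 := by
      rw [abs_of_neg hb] at h; linarith [(abs_lt.1 h).2]
    refine ⟨ha.ne, ?_⟩
    simp only [sgn, if_neg (not_lt.2 ha.le), if_neg (not_lt.2 hb.le), ha, hb, if_true]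
  · exact absurd h (by simp)
  · have ha : 0 < a := by
      rw [abs_of_pos hb] at h; linarith [(abs_lt.1 h).1]
    exact ⟨ha.ne', by simp only [sgn, ha, hb, if_true]⟩

section Norms
variable {n : ℕ}

lemma abs_le_nrm2 (u : Fin n → ℝ) (i : Fin n) : |u i| ≤ nrm2 u :=
  Real.abs_le_sqrt <|
    Finset.single_le_sum (f := fun j => u j ^ 2) (fun _ _ => sq_nonneg _) (Finset.mem_univ i)

lemma norm_le_nrm2 (u : Fin n → ℝ) : ‖u‖ ≤ nrm2 u :=
  (pi_norm_le_iff_of_nonneg (Real.sqrt_nonneg _)).2 fun i => abs_le_nrm2 u i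

lemma nrm2_sq (u : Fin n → ℝ) : nrm2 u ^ 2 = ∑ i, u i ^ 2 :=
  Real.sq_sqrt (Finset.sum_nonneg fun _ _ => sq_nonneg _)

lemma nrm2_sq_add_smul (u v : Fin n → ℝ) (t : ℝ) :
    nrm2 (u + t • v) ^ 2 = nrm2 u ^ 2 + 2 * t * (u ⬝ᵥ v) + t ^ 2 * nrm2 v ^ 2 := by
  simp only [nrm2_sq, dotProduct, Pi.add_apply, Pi.smul_apply, smul_eq_mul, Finset.mul_sum,
    ← Finset.sum_add_distrib]
  exact Finset.sum_congr rfl fun i _ => by ring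

lemma l1norm_add_single (x : Fin n → ℝ) (k : Fin n) (t : ℝ) :
    l1norm (x + Pi.single k t) = l1norm x + (|x k + t| - |x k|) := by
  unfold l1norm
  rw [← Finset.add_sum_erase _ _ (Finset.mem_univ k),
    ← Finset.add_sum_erase _ _ (Finset.mem_univ k),
    Finset.sum_congr rfl fun i hi => by
      rw [Pi.add_apply, Pi.single_eq_of_ne (Finset.ne_of_mem_erase hi), add_zero]]
  simp only [Pi.add_apply, Pi.single_eq_same]
  ring

end Norms

lemma linf_le_norm {ι : Type*} [Fintype ι] (u : ι → ℝ) : linf u ≤ ‖u‖ :=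
  Real.iSup_le (fun i => norm_le_pi_norm u i) (norm_nonneg u)

lemma norm_submatrix_transpose_mulVec_le {ι m n : Type*} [Fintype ι] [Fintype m] [Fintype n]
    (Φ : Matrix m n ℝ) (f : ι → n) (r : m → ℝ) : ‖(Φ.submatrix id f)ᵀ *ᵥ r‖ ≤ ‖Φᵀ *ᵥ r‖ :=
  (pi_norm_le_iff_of_nonneg (norm_nonneg _)).2 fun i => norm_le_pi_norm (Φᵀ *ᵥ r) (f i)

section Gram
variable {m n : Type*} [Fintype m] [Fintype n]

lemma exists_norm_mulVec_le (M : Matrix m n ℝ) : ∃ K ≥ 0, ∀ v, ‖M *ᵥ v‖ ≤ K * ‖v‖ :=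
  letI := Matrix.linftyOpNormedAddCommGroup (m := m) (n := n) (α := ℝ)
  ⟨‖M‖, norm_nonneg M, linfty_opNorm_mulVec M⟩

variable [DecidableEq n]

lemma isUnit_det_transpose_mul_self {A : Matrix m n ℝ} (hA : LinearIndependent ℝ A.col) :
    IsUnit (Aᵀ * A).det := by
  have h := PosDef.conjTranspose_mul_self A (mulVec_injective_iff.2 hA)
  rw [conjTranspose_eq_transpose_of_trivial] at h
  exact (isUnit_iff_isUnit_det _).1 h.isUnit

lemma eq_inv_gram_mulVec {A : Matrix m n ℝ} (hA : IsUnit (Aᵀ * A).det) {r w : m → ℝ}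
    {h : n → ℝ} (hr : r = w + A *ᵥ h) : h = (Aᵀ * A)⁻¹ *ᵥ (Aᵀ *ᵥ r - Aᵀ *ᵥ w) := by
  rw [hr, mulVec_add, add_sub_cancel_left, mulVec_mulVec, mulVec_mulVec, Matrix.mul_assoc,
    nonsing_inv_mul _ hA, one_mulVec]

end Gram

noncomputable def lassoObjective {N P : ℕ} (Φ : Matrix (Fin P) (Fin N) ℝ) (y : Fin P → ℝ)
    (lam : ℝ) (x : Fin N → ℝ) : ℝ :=
  1 / (2 * lam) * nrm2 (Φ *ᵥ x - y) ^ 2 + l1norm x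

section Optimality
variable {N P : ℕ} {Φ : Matrix (Fin P) (Fin N) ℝ} {y : Fin P → ℝ} {lam : ℝ} {xs : Fin N → ℝ}

lemma lassoObjective_perturb (hlam : 0 < lam)
    (hmin : ∀ x, lassoObjective Φ y lam xs ≤ lassoObjective Φ y lam x) (k : Fin N) (t : ℝ) :
    2 * t * (Φᵀ *ᵥ (y - Φ *ᵥ xs)) k ≤
      t ^ 2 * nrm2 (Φ.col k) ^ 2 + 2 * lam * (|xs k + t| - |xs k|) := by
  have hres : Φ *ᵥ (xs + Pi.single k t) - y = (Φ *ᵥ xs - y) + t • Φ.col k := by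
    ext p
    simp only [mulVec_add, mulVec_single, op_smul_eq_smul, Pi.sub_apply, Pi.add_apply,
      Pi.smul_apply, col_apply, smul_eq_mul]
    ring
  have hdual : (Φ *ᵥ xs - y) ⬝ᵥ Φ.col k = -(Φᵀ *ᵥ (y - Φ *ᵥ xs)) k := by
    simp only [dotProduct, mulVec, transpose_apply, col_apply, Pi.sub_apply,
      ← Finset.sum_neg_distrib]
    exact Finset.sum_congr rfl fun p _ => by ring
  have h := hmin (xs + Pi.single k t)
  rw [lassoObjective, lassoObjective, hres, nrm2_sq_add_smul, hdual, l1norm_add_single] at h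
  have h2 : 0 ≤ 1 / (2 * lam) * (t ^ 2 * nrm2 (Φ.col k) ^ 2 - 2 * t * (Φᵀ *ᵥ (y - Φ *ᵥ xs)) k)
      + (|xs k + t| - |xs k|) := by linarith
  have h3 := mul_nonneg (by positivity : (0 : ℝ) ≤ 2 * lam) h2
  rw [mul_add, ← mul_assoc, mul_one_div_cancel (by positivity), one_mul] at h3
  linarith

lemma abs_lasso_dual_le (hlam : 0 < lam)
    (hmin : ∀ x, lassoObjective Φ y lam xs ≤ lassoObjective Φ y lam x) (k : Fin N) :
    |(Φᵀ *ᵥ (y - Φ *ᵥ xs)) k| ≤ lam := by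
  have hstep : ∀ τ, |xs k + τ| - |xs k| ≤ |τ| := fun τ => by
    linarith [abs_add_le (xs k) τ]
  rw [abs_le, neg_le]
  constructor <;> refine le_of_eventually_two_mul_le (n := nrm2 (Φ.col k) ^ 2) ?_ <;>
    filter_upwards [self_mem_nhdsWithin] with τ (hτ : 0 < τ)
  · have := lassoObjective_perturb hlam hmin k (-τ)
    nlinarith [hstep (-τ), abs_neg τ, abs_of_pos hτ]
  · have := lassoObjective_perturb hlam hmin k τ
    nlinarith [hstep τ, abs_of_pos hτ]

lemma norm_lasso_dual_le (hlam : 0 < lam)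
    (hmin : ∀ x, lassoObjective Φ y lam xs ≤ lassoObjective Φ y lam x) :
    ‖Φᵀ *ᵥ (y - Φ *ᵥ xs)‖ ≤ lam :=
  (pi_norm_le_iff_of_nonneg hlam.le).2 fun k => abs_lasso_dual_le hlam hmin k

lemma lasso_dual_eq_of_ne_zero (hlam : 0 < lam)
    (hmin : ∀ x, lassoObjective Φ y lam xs ≤ lassoObjective Φ y lam x) {k : Fin N}
    (hk : xs k ≠ 0) : (Φᵀ *ᵥ (y - Φ *ᵥ xs)) k = lam * sgn (xs k) := by
  have hbound := abs_le.1 (abs_lasso_dual_le hlam hmin k)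
  rcases hk.lt_or_gt with hneg | hpos
  · suffices (Φᵀ *ᵥ (y - Φ *ᵥ xs)) k ≤ -lam by
      simp only [sgn, if_neg (not_lt.2 hneg.le), hneg, if_true]; linarith
    refine le_of_eventually_two_mul_le (n := nrm2 (Φ.col k) ^ 2) ?_
    filter_upwards [Ioo_mem_nhdsGT (neg_pos.2 hneg)] with τ ⟨hτ, hτk⟩
    have := lassoObjective_perturb hlam hmin k τ
    rw [abs_of_neg hneg, abs_of_neg (by linarith)] at this
    linarith
  · suffices lam ≤ (Φᵀ *ᵥ (y - Φ *ᵥ xs)) k by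
      simp only [sgn, hpos, if_true]; linarith
    refine le_of_eventually_two_mul_le (n := nrm2 (Φ.col k) ^ 2) ?_
    filter_upwards [Ioo_mem_nhdsGT hpos] with τ ⟨hτ, hτk⟩
    have := lassoObjective_perturb hlam hmin k (-τ)
    rw [abs_of_pos hpos, abs_of_pos (by linarith)] at this
    linarith

end Optimality

section RestrictedSupport
variable {N P : ℕ} (Φ : Matrix (Fin P) (Fin N) ℝ) (I : Finset (Fin N))

lemma mulVec_eq_colsub_mulVec {v : Fin N → ℝ} (hv : ∀ j ∉ I, v j = 0) :
    Φ *ᵥ v = colsub Φ I *ᵥ fun i => v i := by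
  ext p
  simp only [mulVec, dotProduct, colsub, submatrix_apply, id]
  rw [Finset.sum_coe_sort I fun j => Φ p j * v j]
  exact (Finset.sum_subset I.subset_univ fun j _ hj => by rw [hv j hj, mul_zero]).symm

lemma lasso_residual_eq {x₀ xs : Fin N → ℝ} (w : Fin P → ℝ) (hx₀ : ∀ j ∉ I, x₀ j = 0)
    (hxs : ∀ j ∉ I, xs j = 0) :
    Φ *ᵥ x₀ + w - Φ *ᵥ xs = w + colsub Φ I *ᵥ fun i => x₀ i - xs i := by
  have h := mulVec_eq_colsub_mulVec Φ I (v := x₀ - xs) fun j hj => by simp [hx₀ j hj, hxs j hj]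
  rw [mulVec_sub] at h
  rw [← show Φ *ᵥ x₀ - Φ *ᵥ xs = colsub Φ I *ᵥ fun i => x₀ i - xs i from h]
  abel

variable {Φ I}

lemma norm_sub_le_of_support {x₀ xs : Fin N → ℝ} (hx₀ : ∀ j ∉ I, x₀ j = 0)
    (hxs : ∀ j ∉ I, xs j = 0) : ‖xs - x₀‖ ≤ ‖fun i : I => x₀ i - xs i‖ := by
  refine (pi_norm_le_iff_of_nonneg (norm_nonneg _)).2 fun j => ?_
  by_cases hj : j ∈ I
  · simpa [norm_sub_rev] using norm_le_pi_norm (fun i : I => x₀ i - xs i) ⟨j, hj⟩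
  · simp [hx₀ j hj, hxs j hj]

lemma exists_lasso_error_bound (hli : LinearIndependent ℝ (colsub Φ I).col) :
    ∃ K ≥ 0, ∀ (x₀ xs : Fin N → ℝ) (w : Fin P → ℝ) (lam : ℝ), 0 < lam →
      (∀ x, lassoObjective Φ (Φ *ᵥ x₀ + w) lam xs ≤ lassoObjective Φ (Φ *ᵥ x₀ + w) lam x) →
      (∀ j ∉ I, x₀ j = 0) → (∀ j ∉ I, xs j = 0) → ‖xs - x₀‖ ≤ K * (lam + ‖w‖) := by
  set A := colsub Φ I
  obtain ⟨Kg, hKg, hGinv⟩ := exists_norm_mulVec_le (Aᵀ * A)⁻¹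
  obtain ⟨Ka, hKa, hAt⟩ := exists_norm_mulVec_le Aᵀ
  refine ⟨Kg * max 1 Ka, by positivity, fun x₀ xs w lam hlam hmin hx₀ hxs => ?_⟩
  have hAr : ‖Aᵀ *ᵥ (Φ *ᵥ x₀ + w - Φ *ᵥ xs)‖ ≤ lam :=
    (norm_submatrix_transpose_mulVec_le _ _ _).trans (norm_lasso_dual_le hlam hmin)
  calc ‖xs - x₀‖ ≤ ‖fun i : I => x₀ i - xs i‖ := norm_sub_le_of_support hx₀ hxs
    _ ≤ Kg * ‖Aᵀ *ᵥ (Φ *ᵥ x₀ + w - Φ *ᵥ xs) - Aᵀ *ᵥ w‖ := by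
      rw [eq_inv_gram_mulVec (isUnit_det_transpose_mul_self hli)
        (lasso_residual_eq Φ I w hx₀ hxs)]
      exact hGinv _
    _ ≤ Kg * (lam + Ka * ‖w‖) := by
      gcongr
      exact (norm_sub_le _ _).trans (add_le_add hAr (hAt w))
    _ ≤ Kg * max 1 Ka * (lam + ‖w‖) := by
      rw [mul_assoc]
      gcongr
      nlinarith [le_max_left 1 Ka, le_max_right 1 Ka, norm_nonneg w]

lemma exists_lasso_dual_bound (hli : LinearIndependent ℝ (colsub Φ I).col) :
    ∃ K ≥ 0, ∀ (x₀ xs : Fin N → ℝ) (w : Fin P → ℝ) (lam : ℝ) (s : I → ℝ), 0 < lam →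
      (∀ x, lassoObjective Φ (Φ *ᵥ x₀ + w) lam xs ≤ lassoObjective Φ (Φ *ᵥ x₀ + w) lam x) →
      (∀ j ∉ I, x₀ j = 0) → (∀ j ∉ I, xs j = 0) → (∀ i : I, xs i ≠ 0 ∧ sgn (xs i) = s i) →
      lam * ICval Φ I s ≤ lam + K * ‖w‖ := by
  set A := colsub Φ I
  set B := Φ.submatrix id ((↑) : {j // j ∉ I} → Fin N)
  set M := Bᵀ * (1 - A * (Aᵀ * A)⁻¹ * Aᵀ)
  obtain ⟨K, hK, hM⟩ := exists_norm_mulVec_le M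
  refine ⟨K, hK, fun x₀ xs w lam s hlam hmin hx₀ hxs hs => ?_⟩
  set r := Φ *ᵥ x₀ + w - Φ *ᵥ xs
  have hAr : Aᵀ *ᵥ r = lam • s := funext fun i => by
    rw [Pi.smul_apply, smul_eq_mul, ← (hs i).2]
    exact lasso_dual_eq_of_ne_zero hlam hmin (hs i).1
  have hBr : Bᵀ *ᵥ r = lam • (Bᵀ *ᵥ pFvec Φ I s) + M *ᵥ w := by
    have hr : r = w + A *ᵥ fun i => x₀ i - xs i := lasso_residual_eq Φ I w hx₀ hxs
    conv_lhs => rw [hr, eq_inv_gram_mulVec (isUnit_det_transpose_mul_self hli) hr, hAr]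
    simp only [pFvec, M, mulVec_add, mulVec_sub, mulVec_smul, ← mulVec_mulVec, sub_mulVec,
      one_mulVec]
    abel
  calc lam * ICval Φ I s ≤ ‖lam • (Bᵀ *ᵥ pFvec Φ I s)‖ := by
        rw [norm_smul, Real.norm_of_nonneg hlam.le]
        exact mul_le_mul_of_nonneg_left (linf_le_norm _) hlam.le
    _ = ‖Bᵀ *ᵥ r - M *ᵥ w‖ := by rw [hBr, add_sub_cancel_right]
    _ ≤ lam + K * ‖w‖ :=
      (norm_sub_le _ _).trans (add_le_add ((norm_submatrix_transpose_mulVec_le _ _ _).trans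
        (norm_lasso_dual_le hlam hmin)) (hM w))

end RestrictedSupport

theorem stmt13_general {N P : ℕ} (Φ : Matrix (Fin P) (Fin N) ℝ) (x₀ : Fin N → ℝ)
    (hli : LinearIndependent ℝ (fun i : ↥(suppF x₀) => Φᵀ (i : Fin N)))
    (hIC : 1 < ICval Φ (suppF x₀) (fun i => sgn (x₀ i))) :
    ∃ C > (0:ℝ), ∀ (lam : ℝ) (w : Fin P → ℝ),
      0 < lam → lam ≤ C → nrm2 w ≤ C * lam →
      ∀ xs : Fin N → ℝ,
        (∀ x, (1 / (2 * lam)) * nrm2 (Φ.mulVec xs - (Φ.mulVec x₀ + w)) ^ 2 + l1norm xs ≤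
              (1 / (2 * lam)) * nrm2 (Φ.mulVec x - (Φ.mulVec x₀ + w)) ^ 2 + l1norm x) →
        ¬ (∀ i, xs i ≠ 0 → x₀ i ≠ 0) := by
  set I := suppF x₀
  have hx₀ : ∀ j ∉ I, x₀ j = 0 := fun j hj => by simpa [I, suppF] using hj
  obtain ⟨K₁, hK₁, herr⟩ := exists_lasso_error_bound hli
  obtain ⟨K₂, hK₂, hdual⟩ := exists_lasso_dual_bound hli
  obtain ⟨C, hC, hC1, hCsign, hCIC⟩ : ∃ C > 0, C < 1 ∧ (∀ i ∈ I, 2 * K₁ * C < |x₀ i|) ∧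
      K₂ * C < ICval Φ I (fun i => sgn (x₀ i)) - 1 :=
    (eventually_mem_nhdsWithin.and <|
      (eventually_nhdsWithin_of_eventually_nhds (eventually_lt_nhds one_pos)).and <|
      ((Finset.eventually_all I).2 fun i hi =>
        eventually_mul_lt _ (abs_pos.2 (by simpa [I, suppF] using hi))).and <|
      eventually_mul_lt K₂ (by linarith)).exists
  refine ⟨C, hC, fun lam w hlam hlamC hw xs hmin hsupp => ?_⟩
  have hxs : ∀ j ∉ I, xs j = 0 := fun j hj =>
    by_contra fun h => hj (by simpa [I, suppF] using hsupp j h)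
  have hw' : ‖w‖ ≤ C * lam := (norm_le_nrm2 w).trans hw
  have hclose : ‖xs - x₀‖ ≤ 2 * K₁ * C := by
    have hsmall : lam + ‖w‖ ≤ 2 * C := by nlinarith
    calc ‖xs - x₀‖ ≤ K₁ * (lam + ‖w‖) := herr x₀ xs w lam hlam hmin hx₀ hxs
      _ ≤ 2 * K₁ * C := by nlinarith
  have hsign : ∀ i : I, xs i ≠ 0 ∧ sgn (xs i) = sgn (x₀ i) := fun i =>
    sgn_eq_of_abs_sub_lt <| ((norm_le_pi_norm (xs - x₀) i).trans hclose).trans_lt (hCsign i i.2)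
  have hdual_le := hdual x₀ xs w lam _ hlam hmin hx₀ hxs hsign
  nlinarith [mul_le_mul_of_nonneg_left hw' hK₂]

/-- sharpness/instability for the Lasso. If `x₀` is the unique ℓ¹
minimizer on `{x : Φx = Φx₀}`, `Φ_I` is injective and the irrepresentable
quantity exceeds 1, then for `0 < λ ≤ C` and `‖w‖ ≤ Cλ` every Lasso minimizer
`x⋆` satisfies `supp(x⋆) ⊄ supp(x₀)`. -/
theorem stmt13 {N P : ℕ} (Φ : Matrix (Fin P) (Fin N) ℝ) (x₀ : Fin N → ℝ)
    (huniq : ∀ x, Φ.mulVec x = Φ.mulVec x₀ → x ≠ x₀ → l1norm x₀ < l1norm x)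
    (hli : LinearIndependent ℝ (fun i : ↥(suppF x₀) => Φᵀ (i : Fin N)))
    (hIC : 1 < ICval Φ (suppF x₀) (fun i => sgn (x₀ i))) :
    ∃ C > (0:ℝ), ∀ (lam : ℝ) (w : Fin P → ℝ),
      0 < lam → lam ≤ C → nrm2 w ≤ C * lam →
      ∀ xs : Fin N → ℝ,
        (∀ x, (1 / (2 * lam)) * nrm2 (Φ.mulVec xs - (Φ.mulVec x₀ + w)) ^ 2 + l1norm xs ≤
              (1 / (2 * lam)) * nrm2 (Φ.mulVec x - (Φ.mulVec x₀ + w)) ^ 2 + l1norm x) →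
        ¬ (∀ i, xs i ≠ 0 → x₀ i ≠ 0) :=
  stmt13_general Φ x₀ hli hIC
end

section
/- Let J : ℝ^N → ℝ be a finite-valued convex function, Φ : ℝ^N → ℝ^P linear, λ > 0 and y ∈ ℝ^P. If x₁ and x₂ are both minimizers of x ↦ (1/(2λ))‖Φx − y‖² + J(x), then Φx₁ = Φx₂ and J(x₁) = J(x₂). -/
open Matrix

/-- any two minimizers of `(1/(2λ))‖Φx − y‖² + J(x)` share the same
image under `Φ` and the same value of `J`. -/
theorem stmt15 {N P : ℕ} (J : (Fin N → ℝ) → ℝ) (hJ : ConvexOn ℝ Set.univ J)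
    (Φ : Matrix (Fin P) (Fin N) ℝ) (lam : ℝ) (hlam : 0 < lam) (y : Fin P → ℝ)
    (x₁ x₂ : Fin N → ℝ)
    (h₁ : ∀ x, (1 / (2 * lam)) * nrm2 (Φ.mulVec x₁ - y) ^ 2 + J x₁ ≤
               (1 / (2 * lam)) * nrm2 (Φ.mulVec x - y) ^ 2 + J x)
    (h₂ : ∀ x, (1 / (2 * lam)) * nrm2 (Φ.mulVec x₂ - y) ^ 2 + J x₂ ≤
               (1 / (2 * lam)) * nrm2 (Φ.mulVec x - y) ^ 2 + J x) :
    Φ.mulVec x₁ = Φ.mulVec x₂ ∧ J x₁ = J x₂ := by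
  have hc : 0 < 1 / (2 * lam) := by positivity
  set c := 1 / (2 * lam) with hcdef
  have hq : ∀ u : Fin P → ℝ, nrm2 u ^ 2 = ∑ i, u i ^ 2 := fun u =>
    Real.sq_sqrt (Finset.sum_nonneg fun i _ => sq_nonneg _)
  set xm : Fin N → ℝ := (1/2 : ℝ) • x₁ + (1/2 : ℝ) • x₂ with hxm
  have hmul : Φ.mulVec xm = (1/2 : ℝ) • Φ.mulVec x₁ + (1/2 : ℝ) • Φ.mulVec x₂ := by
    simp [hxm, Matrix.mulVec_add, Matrix.mulVec_smul]
  have hJm : J xm ≤ (1/2 : ℝ) * J x₁ + (1/2 : ℝ) * J x₂ := by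
    have := hJ.2 (Set.mem_univ x₁) (Set.mem_univ x₂)
      (by norm_num : (0:ℝ) ≤ 1/2) (by norm_num : (0:ℝ) ≤ 1/2) (by norm_num)
    simpa [hxm, one_div, smul_eq_mul] using this
  set A := ∑ i, (Φ.mulVec x₁ - y) i ^ 2 with hA
  set B := ∑ i, (Φ.mulVec x₂ - y) i ^ 2 with hB
  set D := ∑ i, (Φ.mulVec x₁ i - Φ.mulVec x₂ i) ^ 2 with hD
  have hDnn : 0 ≤ D := Finset.sum_nonneg fun i _ => sq_nonneg _
  have hid : (∑ i, (Φ.mulVec xm - y) i ^ 2) = (1/2) * A + (1/2) * B - (1/4) * D := by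
    rw [hA, hB, hD, Finset.mul_sum, Finset.mul_sum, Finset.mul_sum,
      ← Finset.sum_add_distrib, ← Finset.sum_sub_distrib]
    refine Finset.sum_congr rfl fun i _ => ?_
    have : Φ.mulVec xm i = (1/2 : ℝ) * Φ.mulVec x₁ i + (1/2 : ℝ) * Φ.mulVec x₂ i := by
      rw [hmul]; simp [smul_eq_mul]
    simp only [Pi.sub_apply, this]
    ring
  have e1 : c * A + J x₁ ≤ c * B + J x₂ := by
    have := h₁ x₂; rwa [hq, hq] at this
  have e2 : c * B + J x₂ ≤ c * A + J x₁ := by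
    have := h₂ x₁; rwa [hq, hq] at this
  have e3 : c * A + J x₁ ≤ c * ((1/2) * A + (1/2) * B - (1/4) * D) + J xm := by
    have := h₁ xm; rwa [hq, hq, hid] at this
  have hD0 : D = 0 := by nlinarith [mul_nonneg hc.le hDnn]
  have hΦ : Φ.mulVec x₁ = Φ.mulVec x₂ := by
    funext i
    have := (Finset.sum_eq_zero_iff_of_nonneg (fun j _ => sq_nonneg
      (Φ.mulVec x₁ j - Φ.mulVec x₂ j))).mp hD0 i (Finset.mem_univ i)
    have := pow_eq_zero_iff (n := 2) (by norm_num) |>.mp this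
    linarith [sub_eq_zero.mp this]
  refine ⟨hΦ, ?_⟩
  have hAB : A = B := by rw [hA, hB, hΦ]
  rw [hAB] at e1 e2
  linarith
end

section
/- (Nonexpansiveness of the prediction map.) Let J : ℝ^N → ℝ be a finite-valued convex function, Φ : ℝ^N → ℝ^P linear, and λ > 0. If x₁ is a minimizer of x ↦ (1/(2λ))‖Φx − y₁‖² + J(x) and x₂ is a minimizer of x ↦ (1/(2λ))‖Φx − y₂‖² + J(x), then ‖Φx₁ − Φx₂‖ ≤ ‖y₁ − y₂‖. In particular the map y ↦ Φx⋆(y), where x⋆(y) is any minimizer at observation y, is single-valued and Lipschitz-continuous with constant 1 on the set of observations where minimizers exist. -/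
open Matrix

/-- nonexpansiveness of the prediction map: if `x₁`, `x₂` are
minimizers at observations `y₁`, `y₂` respectively, then
`‖Φx₁ − Φx₂‖ ≤ ‖y₁ − y₂‖` (hence `y ↦ Φx⋆(y)` is single-valued and 1-Lipschitz). -/
theorem stmt16 {N P : ℕ} (J : (Fin N → ℝ) → ℝ) (hJ : ConvexOn ℝ Set.univ J)
    (Φ : Matrix (Fin P) (Fin N) ℝ) (lam : ℝ) (hlam : 0 < lam)
    (y₁ y₂ : Fin P → ℝ) (x₁ x₂ : Fin N → ℝ)
    (h₁ : ∀ x, (1 / (2 * lam)) * nrm2 (Φ.mulVec x₁ - y₁) ^ 2 + J x₁ ≤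
               (1 / (2 * lam)) * nrm2 (Φ.mulVec x - y₁) ^ 2 + J x)
    (h₂ : ∀ x, (1 / (2 * lam)) * nrm2 (Φ.mulVec x₂ - y₂) ^ 2 + J x₂ ≤
               (1 / (2 * lam)) * nrm2 (Φ.mulVec x - y₂) ^ 2 + J x) :
    nrm2 (Φ.mulVec x₁ - Φ.mulVec x₂) ≤ nrm2 (y₁ - y₂) := by
  have nrm2_sq : ∀ {n : ℕ} (u : Fin n → ℝ), nrm2 u ^ 2 = ∑ i, (u i) ^ 2 := by
    intro n u
    exact Real.sq_sqrt (Finset.sum_nonneg fun i _ => sq_nonneg _)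
  set a := Φ.mulVec x₁ with ha
  set b := Φ.mulVec x₂ with hb
  obtain ⟨C, hCdef⟩ : ∃ C : ℝ, C = ∑ i, (b i - a i) ^ 2 := ⟨_, rfl⟩
  obtain ⟨A₁, hA1⟩ : ∃ A : ℝ, A = ∑ i, (a i - y₁ i) * (b i - a i) := ⟨_, rfl⟩
  obtain ⟨A₂, hA2⟩ : ∃ A : ℝ, A = ∑ i, (b i - y₂ i) * (a i - b i) := ⟨_, rfl⟩
  have hC : 0 ≤ C := hCdef ▸ Finset.sum_nonneg fun i _ => sq_nonneg _
  have h2lam : 0 < 2 * lam := by linarith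
  have hpos : 0 < 1 / (2 * lam) := by positivity
  -- key inequality for each t ∈ (0,1]
  have key : ∀ t : ℝ, 0 < t → t ≤ 1 → 0 ≤ A₁ + A₂ + t * C := by
    intro t ht ht1
    have hcomb : ∀ (u v : Fin N → ℝ), Φ.mulVec ((1 - t) • u + t • v)
        = (1 - t) • Φ.mulVec u + t • Φ.mulVec v := by
      intro u v
      rw [Matrix.mulVec_add, Matrix.mulVec_smul, Matrix.mulVec_smul]
    have e1 := h₁ ((1 - t) • x₁ + t • x₂)
    have e2 := h₂ ((1 - t) • x₂ + t • x₁)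
    have j1 : J ((1 - t) • x₁ + t • x₂) ≤ (1 - t) * J x₁ + t * J x₂ :=
      hJ.2 (Set.mem_univ _) (Set.mem_univ _) (by linarith) (le_of_lt ht) (by ring)
    have j2 : J ((1 - t) • x₂ + t • x₁) ≤ (1 - t) * J x₂ + t * J x₁ :=
      hJ.2 (Set.mem_univ _) (Set.mem_univ _) (by linarith) (le_of_lt ht) (by ring)
    have s1 : nrm2 (Φ.mulVec ((1 - t) • x₁ + t • x₂) - y₁) ^ 2
        = nrm2 (a - y₁) ^ 2 + t * (2 * A₁ + t * C) := by
      rw [nrm2_sq, nrm2_sq, hcomb, ← ha, ← hb, hA1, hCdef,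
        Finset.mul_sum, Finset.mul_sum, ← Finset.sum_add_distrib,
        Finset.mul_sum, ← Finset.sum_add_distrib]
      refine Finset.sum_congr rfl fun i _ => ?_
      simp only [Pi.sub_apply, Pi.add_apply, Pi.smul_apply, smul_eq_mul]
      ring
    have s2 : nrm2 (Φ.mulVec ((1 - t) • x₂ + t • x₁) - y₂) ^ 2
        = nrm2 (b - y₂) ^ 2 + t * (2 * A₂ + t * C) := by
      rw [nrm2_sq, nrm2_sq, hcomb, ← ha, ← hb, hA2, hCdef,
        Finset.mul_sum, Finset.mul_sum, ← Finset.sum_add_distrib,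
        Finset.mul_sum, ← Finset.sum_add_distrib]
      refine Finset.sum_congr rfl fun i _ => ?_
      simp only [Pi.sub_apply, Pi.add_apply, Pi.smul_apply, smul_eq_mul]
      ring
    rw [s1] at e1
    rw [s2] at e2
    have k1 : J x₁ - J x₂ ≤ (1 / (2 * lam)) * (2 * A₁ + t * C) := by
      have expand : (1 / (2 * lam)) * (nrm2 (a - y₁) ^ 2 + t * (2 * A₁ + t * C))
          = (1 / (2 * lam)) * nrm2 (a - y₁) ^ 2
            + t * ((1 / (2 * lam)) * (2 * A₁ + t * C)) := by ring
      rw [expand] at e1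
      nlinarith [e1, j1]
    have k2 : J x₂ - J x₁ ≤ (1 / (2 * lam)) * (2 * A₂ + t * C) := by
      have expand : (1 / (2 * lam)) * (nrm2 (b - y₂) ^ 2 + t * (2 * A₂ + t * C))
          = (1 / (2 * lam)) * nrm2 (b - y₂) ^ 2
            + t * ((1 / (2 * lam)) * (2 * A₂ + t * C)) := by ring
      rw [expand] at e2
      nlinarith [e2, j2]
    nlinarith [k1, k2, hpos]
  -- pass to the limit t → 0 : 0 ≤ A₁ + A₂
  have hsum : 0 ≤ A₁ + A₂ := by
    by_contra h
    push_neg at h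
    rcases eq_or_lt_of_le hC with hC0 | hC0
    · have := key 1 one_pos le_rfl
      nlinarith
    · have htpos : 0 < min 1 (-(A₁ + A₂) / (2 * C)) := lt_min one_pos (div_pos (by linarith) (by linarith))
      have ht1 : min 1 (-(A₁ + A₂) / (2 * C)) ≤ 1 := min_le_left _ _
      have ht2 : min 1 (-(A₁ + A₂) / (2 * C)) ≤ -(A₁ + A₂) / (2 * C) := min_le_right _ _
      have hk := key _ htpos ht1
      have htC : min 1 (-(A₁ + A₂) / (2 * C)) * C ≤ -(A₁ + A₂) / 2 := by
        have h1 : min 1 (-(A₁ + A₂) / (2 * C)) * C ≤ (-(A₁ + A₂) / (2 * C)) * C :=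
          mul_le_mul_of_nonneg_right ht2 hC
        have h2 : (-(A₁ + A₂) / (2 * C)) * C = -(A₁ + A₂) / 2 := by
          field_simp
        linarith
      linarith
  -- A₁ + A₂ = ⟨a-b, y₁-y₂⟩ - C
  have hid : A₁ + A₂ = (∑ i, (a i - b i) * (y₁ i - y₂ i)) - C := by
    rw [hA1, hA2, hCdef, ← Finset.sum_add_distrib, ← Finset.sum_sub_distrib]
    exact Finset.sum_congr rfl fun i _ => by ring
  have hCle : C ≤ ∑ i, (a i - b i) * (y₁ i - y₂ i) := by linarith [hid]
  obtain ⟨D, hDdef⟩ : ∃ D : ℝ, D = ∑ i, (y₁ i - y₂ i) ^ 2 := ⟨_, rfl⟩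
  have hD : 0 ≤ D := hDdef ▸ Finset.sum_nonneg fun i _ => sq_nonneg _
  have cs : (∑ i, (a i - b i) * (y₁ i - y₂ i)) ^ 2 ≤ C * D := by
    rw [hCdef, hDdef]
    have habC : (∑ i, (b i - a i) ^ 2) = ∑ i, (a i - b i) ^ 2 :=
      Finset.sum_congr rfl fun i _ => by ring
    rw [habC]
    exact Finset.sum_mul_sq_le_sq_mul_sq _ _ _
  have hCD : C ≤ D := by
    rcases eq_or_lt_of_le hC with h0 | h0
    · rw [← h0]; exact hD
    · nlinarith [hCle, cs, h0]
  show Real.sqrt (∑ i, ((a - b) i) ^ 2) ≤ Real.sqrt (∑ i, ((y₁ - y₂) i) ^ 2)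
  have e1 : (∑ i, ((a - b) i) ^ 2) = C := by
    rw [hCdef]; exact Finset.sum_congr rfl fun i _ => by simp only [Pi.sub_apply]; ring
  have e2 : (∑ i, ((y₁ - y₂) i) ^ 2) = D := by
    rw [hDdef]; exact Finset.sum_congr rfl fun i _ => by simp only [Pi.sub_apply]
  rw [e1, e2]
  exact Real.sqrt_le_sqrt hCD
end
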